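/- arXiv:1504.05925 — 5 statements merged into one kernel-verified Lean document; each statement's English description precedes it below -/
import Mathlib

section
/- Let 𝔤 be a finite-dimensional real Lie algebra whose Killing form B is negative definite, let 𝔨 ⊆ 𝔤 be a Lie subalgebra, and let 𝔪 be the B-orthogonal complement of 𝔨 (so 𝔤 = 𝔨 ⊕ 𝔪 as vector spaces). Then there exists an inner product on 𝔪 satisfying the cyclic condition if and only if [𝔪,𝔪] ⊆ 𝔨; moreover, in that case every inner product on 𝔪 satisfies the cyclic condition. -/
/-!
The negative Killing form `β` restricted to `𝔪` is an inner product for which `β([X,Y]_𝔪, Z)` is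
invariant under cyclic permutations, by ad-invariance of `β` and `𝔨 ⊥ 𝔪`. Given an inner product
`Φ` satisfying the cyclic condition, diagonalise `Φ` in a `β`-orthonormal basis `eᵢ`, with
eigenvalues `λᵢ > 0`: the cyclic condition at `(eᵢ, eⱼ, eₖ)` becomes
`(λᵢ + λⱼ + λₖ) β([eᵢ,eⱼ]_𝔪, eₖ) = 0`, so `[𝔪,𝔪]_𝔪 = 0`. Conversely, if `[𝔪,𝔪] ⊆ 𝔨` then every
term of every cyclic sum vanishes.
-/

open scoped RealInnerProductSpace

section InnerProductSpace

variable {E : Type*} [NormedAddCommGroup E] [InnerProductSpace ℝ E] [FiniteDimensional ℝ E]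

theorem LinearMap.IsSymmetric.eigenvalues_pos {T : E →ₗ[ℝ] E} (hT : T.IsSymmetric)
    (hTpos : ∀ x, x ≠ 0 → 0 < ⟪T x, x⟫) {n : ℕ} (hn : Module.finrank ℝ E = n) (i : Fin n) :
    0 < hT.eigenvalues hn i := by
  have he := (hT.eigenvectorBasis hn).orthonormal
  simpa [hT.apply_eigenvectorBasis, real_inner_smul_left, real_inner_self_eq_norm_sq, he.1 i]
    using hTpos _ (he.ne_zero i)

theorem LinearMap.IsSymmetric.eq_zero_of_cyclicSum_eq_zero {T : E →ₗ[ℝ] E} (hT : T.IsSymmetric)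
    (hTpos : ∀ x, x ≠ 0 → 0 < ⟪T x, x⟫) {F : E →ₗ[ℝ] E →ₗ[ℝ] E}
    (hF : ∀ x y z, ⟪F x y, z⟫ = ⟪F y z, x⟫)
    (hcyc : ∀ x y z, ⟪T (F x y), z⟫ + ⟪T (F y z), x⟫ + ⟪T (F z x), y⟫ = 0) :
    F = 0 := by
  set e := hT.eigenvectorBasis rfl
  set μ := hT.eigenvalues rfl
  have hTe : ∀ i, T (e i) = μ i • e i := hT.apply_eigenvectorBasis rfl
  have hμ : ∀ i, 0 < μ i := hT.eigenvalues_pos hTpos rfl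
  have hFe : ∀ i j k, ⟪F (e i) (e j), e k⟫ = 0 := by
    intro i j k
    have h := hcyc (e i) (e j) (e k)
    simp only [hT _ (e _), hTe, real_inner_smul_right] at h
    rw [← hF (e j) (e k) (e i), ← hF (e i) (e j) (e k), ← add_mul, ← add_mul] at h
    have hsum : 0 < μ k + μ i + μ j := by linarith [hμ i, hμ j, hμ k]
    exact (mul_eq_zero.1 h).resolve_left hsum.ne'
  refine e.toBasis.ext fun i => e.toBasis.ext fun j => ?_
  rw [e.coe_toBasis, LinearMap.zero_apply, LinearMap.zero_apply, ← e.sum_repr' (F (e i) (e j))]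
  exact Finset.sum_eq_zero fun k _ => by rw [real_inner_comm, hFe, zero_smul]

end InnerProductSpace

namespace LinearMap.BilinForm

variable {V : Type*} [AddCommGroup V] [Module ℝ V]

abbrev innerProductSpaceCore (β : LinearMap.BilinForm ℝ V) (hβ : β.IsSymm)
    (hβpos : ∀ x, x ≠ 0 → 0 < β x x) : InnerProductSpace.Core ℝ V where
  inner x y := β x y
  conj_inner_symm x y := hβ.eq y x
  re_inner_nonneg x := by
    rcases eq_or_ne x 0 with rfl | hx
    · simp
    · exact (hβpos x hx).le
  add_left x y z := by simp
  smul_left x y r := by simp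
  definite x hx := by_contra fun h => (hβpos x h).ne' hx

theorem eq_zero_of_cyclicSum_eq_zero [FiniteDimensional ℝ V]
    {Φ β : LinearMap.BilinForm ℝ V} (hΦ : Φ.IsSymm) (hΦpos : ∀ x, x ≠ 0 → 0 < Φ x x)
    (hβ : β.IsSymm) (hβpos : ∀ x, x ≠ 0 → 0 < β x x) {F : V →ₗ[ℝ] V →ₗ[ℝ] V}
    (hβF : ∀ x y z, β (F x y) z = β (F y z) x)
    (hΦF : ∀ x y z, Φ (F x y) z + Φ (F y z) x + Φ (F z x) y = 0) :
    F = 0 := by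
  let := β.innerProductSpaceCore hβ hβpos
  let : NormedAddCommGroup V := InnerProductSpace.Core.toNormedAddCommGroup (𝕜 := ℝ)
  let : InnerProductSpace ℝ V := InnerProductSpace.ofCore _
  have hβnd : β.Nondegenerate :=
    ⟨fun x hx => by_contra fun h => (hβpos x h).ne' (hx x),
      fun x hx => by_contra fun h => (hβpos x h).ne' (hx x)⟩
  set T := Φ.symmCompOfNondegenerate β hβnd
  have hT : ∀ x y, ⟪T x, y⟫ = Φ x y := fun x y => symmCompOfNondegenerate_left_apply Φ hβnd y x
  refine LinearMap.IsSymmetric.eq_zero_of_cyclicSum_eq_zero (T := T) (fun x y => ?_)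
    (fun x hx => (hT x x).symm ▸ hΦpos x hx) hβF (fun x y z => ?_)
  · rw [hT, real_inner_comm, hT, hΦ.eq]
  · simpa only [hT] using hΦF x y z

end LinearMap.BilinForm

section ProjectedBracket

variable {R L : Type*} [CommRing R] [LieRing L] [LieAlgebra R L] {K m : Submodule R L}

/-- `projBracket hcompl X Y` is the paper's `[X, Y]_𝔪`. -/
noncomputable def projBracket (hcompl : IsCompl K m) : m →ₗ[R] m →ₗ[R] m :=
  ((LieModule.toEnd R L L : L →ₗ[R] Module.End R L).compr₂
    (m.projectionOnto K hcompl.symm)).compl₁₂ m.subtype m.subtype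

theorem projBracket_apply (hcompl : IsCompl K m) (x y : m) :
    projBracket hcompl x y = m.projectionOnto K hcompl.symm ⁅(x : L), (y : L)⁆ :=
  rfl

theorem projBracket_eq_zero_iff (hcompl : IsCompl K m) :
    projBracket hcompl = 0 ↔ ∀ x ∈ m, ∀ y ∈ m, ⁅x, y⁆ ∈ K := by
  simp only [LinearMap.ext_iff, LinearMap.zero_apply, projBracket_apply,
    Submodule.projectionOnto_apply_eq_zero_iff, Subtype.forall]

theorem apply_projectionOnto_apply {B : LinearMap.BilinForm R L} (hcompl : IsCompl K m)
    (hKm : ∀ k ∈ K, ∀ z ∈ m, B k z = 0) (v : L) {z : L} (hz : z ∈ m) :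
    B (m.projectionOnto K hcompl.symm v) z = B v z := by
  conv_rhs => rw [← Submodule.projection_add_projection_eq_self hcompl.symm v]
  rw [map_add, LinearMap.add_apply, hKm _ (Submodule.projection_apply_mem _ _) z hz, add_zero,
    Submodule.projection_apply]

theorem apply_projBracket_apply_cyclic {B : LinearMap.BilinForm R L} (hB : B.IsSymm)
    (hBinv : ∀ x y z, B ⁅x, y⁆ z = B x ⁅y, z⁆) (hcompl : IsCompl K m)
    (hKm : ∀ k ∈ K, ∀ z ∈ m, B k z = 0) (x y z : m) :
    B (projBracket hcompl x y) z = B (projBracket hcompl y z) x := by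
  rw [projBracket_apply, projBracket_apply, apply_projectionOnto_apply hcompl hKm _ z.2,
    apply_projectionOnto_apply hcompl hKm _ x.2, hBinv, hB.eq]

end ProjectedBracket

/-- For a finite-dimensional real Lie algebra `L` with negative definite
Killing form `B`, a Lie subalgebra `K` and `m` the `B`-orthogonal complement of `K`
(so that `L = K ⊕ m` as vector spaces), there exists an inner product on `m`
satisfying the cyclic condition iff `[m,m] ⊆ K`; and in that case every inner
product on `m` satisfies the cyclic condition. -/
theorem stmt_0
    (L : Type*) [LieRing L] [LieAlgebra ℝ L] [FiniteDimensional ℝ L]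
    (hB : ∀ x : L, x ≠ 0 → killingForm ℝ L x x < 0)
    (K : LieSubalgebra ℝ L) (m : Submodule ℝ L)
    (hm : ∀ y : L, y ∈ m ↔ ∀ x ∈ K, killingForm ℝ L x y = 0)
    (hcompl : IsCompl K.toSubmodule m) :
    ((∃ Φ : ↥m →ₗ[ℝ] ↥m →ₗ[ℝ] ℝ,
        (∀ x y : ↥m, Φ x y = Φ y x) ∧ (∀ x : ↥m, x ≠ 0 → 0 < Φ x x) ∧
        (∀ X Y Z : ↥m,
          Φ (Submodule.linearProjOfIsCompl m K.toSubmodule hcompl.symm ⁅(X : L), (Y : L)⁆) Z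
          + Φ (Submodule.linearProjOfIsCompl m K.toSubmodule hcompl.symm ⁅(Y : L), (Z : L)⁆) X
          + Φ (Submodule.linearProjOfIsCompl m K.toSubmodule hcompl.symm ⁅(Z : L), (X : L)⁆) Y
          = 0))
      ↔ (∀ x ∈ m, ∀ y ∈ m, ⁅x, y⁆ ∈ K))
    ∧ ((∀ x ∈ m, ∀ y ∈ m, ⁅x, y⁆ ∈ K) →
        ∀ Φ : ↥m →ₗ[ℝ] ↥m →ₗ[ℝ] ℝ,
          (∀ x y : ↥m, Φ x y = Φ y x) → (∀ x : ↥m, x ≠ 0 → 0 < Φ x x) →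
          (∀ X Y Z : ↥m,
            Φ (Submodule.linearProjOfIsCompl m K.toSubmodule hcompl.symm ⁅(X : L), (Y : L)⁆) Z
            + Φ (Submodule.linearProjOfIsCompl m K.toSubmodule hcompl.symm ⁅(Y : L), (Z : L)⁆) X
            + Φ (Submodule.linearProjOfIsCompl m K.toSubmodule hcompl.symm ⁅(Z : L), (X : L)⁆) Y
            = 0)) := by
  set F := projBracket hcompl
  set β : LinearMap.BilinForm ℝ m := -(killingForm ℝ L).compl₁₂ m.subtype m.subtype
  have hβ : β.IsSymm := ⟨fun x y => congrArg Neg.neg (LieModule.traceForm_comm ℝ L L x y)⟩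
  have hβpos : ∀ x : m, x ≠ 0 → 0 < β x x := fun x hx =>
    neg_pos.2 (hB x (Submodule.coe_eq_zero.not.2 hx))
  have hβF : ∀ x y z, β (F x y) z = β (F y z) x := fun x y z =>
    congrArg Neg.neg <| apply_projBracket_apply_cyclic ⟨LieModule.traceForm_comm ℝ L L⟩
      (LieModule.traceForm_apply_lie_apply ℝ L L) hcompl (fun k hk z hz => (hm z).1 hz k hk) x y z
  have hcyc_of_eq_zero (hF : F = 0) (Φ : LinearMap.BilinForm ℝ m) (X Y Z : m) :
      Φ (F X Y) Z + Φ (F Y Z) X + Φ (F Z X) Y = 0 := by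
    simp [hF]
  have hF_iff : F = 0 ↔ ∀ x ∈ m, ∀ y ∈ m, ⁅x, y⁆ ∈ K := projBracket_eq_zero_iff hcompl
  rw [← hF_iff]
  refine ⟨⟨fun ⟨Φ, hΦ, hΦpos, hΦF⟩ => ?_, fun hF => ⟨β, hβ.eq, hβpos, hcyc_of_eq_zero hF β⟩⟩,
    fun hF Φ _ _ => hcyc_of_eq_zero hF Φ⟩
  exact LinearMap.BilinForm.eq_zero_of_cyclicSum_eq_zero ⟨hΦ⟩ hΦpos hβ hβpos hβF hΦF
end

section
/- Let 𝔤 be a finite-dimensional real Lie algebra with Killing form B, let 𝔨 ⊆ 𝔤 be a Lie subalgebra and 𝔪 a vector subspace with 𝔤 = 𝔨 ⊕ 𝔪 and B(𝔨,𝔪) = 0. Suppose 𝔪 = 𝔪₁ ⊕ ⋯ ⊕ 𝔪_N with B(𝔪_a,𝔪_b) = 0 for a ≠ b, and let λ₁,…,λ_N be nonzero real numbers such that the symmetric bilinear form ⟨x,y⟩ := Σ_a λ_a B(x_a,y_a) (where x_a denotes the 𝔪_a-component of x) is positive definite on 𝔪. Then ⟨·,·⟩ satisfies the cyclic condition if and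 only if for all indices a,b,c and all x ∈ 𝔪_a, y ∈ 𝔪_b, z ∈ 𝔪_c one has (λ_a + λ_b + λ_c)·B([x,y],z) = 0. -/
/-!
For `z ∈ 𝔪_c` the metric only sees the `𝔪_c`-component of its first argument, and `B` kills
both `𝔨` and the other blocks, so `⟨[x,y]_𝔪, z⟩ = λ_c B([x,y], z)`. By invariance and symmetry
of `B`, the three terms of the cyclic sum for `x ∈ 𝔪_a`, `y ∈ 𝔪_b`, `z ∈ 𝔪_c` are all multiples
of `B([x,y],z)`, with total coefficient `λ_a + λ_b + λ_c`. The cyclic sum is trilinear and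
`𝔪` is spanned by the blocks `𝔪_a`, so it vanishes on `𝔪` iff it vanishes on all triples of
block elements.
-/

/-- The diagonal symmetric bilinear form `⟨x,y⟩ = ∑ a, λ a * B (x_a) (y_a)`, where
`x_a = proj a x` is the `𝔪_a`-component of `x` and `B` is the Killing form. -/
noncomputable def diagKillingForm {L : Type*} [LieRing L] [LieAlgebra ℝ L]
    {N : ℕ} (proj : Fin N → (L →ₗ[ℝ] L)) (lam : Fin N → ℝ) (x y : L) : ℝ :=
  ∑ a, lam a * killingForm ℝ L (proj a x) (proj a y)

namespace LinearMap

variable {ι R M N : Type*} [CommSemiring R] [AddCommMonoid M] [Module R M]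
  [AddCommMonoid N] [Module R N]

def cyclicSum (T : M →ₗ[R] M →ₗ[R] M →ₗ[R] N) : M →ₗ[R] M →ₗ[R] M →ₗ[R] N :=
  T + (lflip.toLinearMap ∘ₗ T).flip + lflip.toLinearMap ∘ₗ T.flip

@[simp]
theorem cyclicSum_apply (T : M →ₗ[R] M →ₗ[R] M →ₗ[R] N) (x y z : M) :
    cyclicSum T x y z = T x y z + T y z x + T z x y :=
  rfl

theorem apply_eq_zero_of_mem_iSup (T : M →ₗ[R] M →ₗ[R] M →ₗ[R] N)
    (p q r : ι → Submodule R M)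
    (h : ∀ a b c, ∀ x ∈ p a, ∀ y ∈ q b, ∀ z ∈ r c, T x y z = 0) {x y z : M}
    (hx : x ∈ ⨆ a, p a) (hy : y ∈ ⨆ b, q b) (hz : z ∈ ⨆ c, r c) : T x y z = 0 := by
  induction hx using Submodule.iSup_induction' with
  | mem a x hx =>
    induction hy using Submodule.iSup_induction' with
    | mem b y hy =>
      induction hz using Submodule.iSup_induction' with
      | mem c z hz => exact h a b c x hx y hy z hz
      | zero => simp
      | add z z' _ _ hz hz' => simp [hz, hz']
    | zero => simp
    | add y y' _ _ hy hy' => simp [hy, hy']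
  | zero => simp
  | add x x' _ _ hx hx' => simp [hx, hx']

end LinearMap

theorem LinearMap.BilinForm.apply_projection_left {R M : Type*} [CommRing R] [AddCommGroup M]
    [Module R M]
    (B : LinearMap.BilinForm R M) {p q : Submodule R M} (hpq : IsCompl p q)
    (hq : ∀ x ∈ q, ∀ y ∈ p, B x y = 0) (u : M) {z : M} (hz : z ∈ p) :
    B (p.projection q hpq u) z = B u z := by
  conv_rhs => rw [← Submodule.projection_add_projection_eq_self hpq u]
  rw [map_add, LinearMap.add_apply, hq _ (Submodule.projection_apply_mem _ _) z hz, add_zero]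

theorem LieModule.traceForm_lie_apply_cycle (R L M : Type*) [CommRing R] [LieRing L]
    [LieAlgebra R L] [AddCommGroup M] [Module R M] [LieRingModule L M] [LieModule R L M]
    (x y z : L) : traceForm R L M ⁅x, y⁆ z = traceForm R L M ⁅y, z⁆ x := by
  rw [traceForm_apply_lie_apply, traceForm_comm]

section DiagonalKillingForm

variable {L : Type*} [LieRing L] [LieAlgebra ℝ L] {N : ℕ}
  {ms : Fin N → Submodule ℝ L} {proj : Fin N → (L →ₗ[ℝ] L)}

noncomputable def diagForm (proj : Fin N → (L →ₗ[ℝ] L)) (lam : Fin N → ℝ) :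
    LinearMap.BilinForm ℝ L :=
  ∑ a, lam a • (killingForm ℝ L).compl₁₂ (proj a) (proj a)

theorem diagForm_apply (lam : Fin N → ℝ) (x y : L) :
    diagForm proj lam x y = diagKillingForm proj lam x y := by
  simp [diagForm, diagKillingForm]

theorem diagKillingForm_eq_of_mem (lam : Fin N → ℝ)
    (hproj_id : ∀ a, ∀ x ∈ ms a, proj a x = x)
    (hproj_zero : ∀ a b, a ≠ b → ∀ x ∈ ms b, proj a x = 0) (w : L) {c : Fin N} {z : L}
    (hz : z ∈ ms c) : diagKillingForm proj lam w z = lam c * killingForm ℝ L (proj c w) z := by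
  rw [diagKillingForm, Finset.sum_eq_single c, hproj_id c z hz]
  · intro d _ hdc
    rw [hproj_zero d c hdc z hz, map_zero, mul_zero]
  · simp

theorem killingForm_proj_apply_of_mem
    (horth : ∀ a b, a ≠ b → ∀ x ∈ ms a, ∀ y ∈ ms b, killingForm ℝ L x y = 0)
    (hproj_mem : ∀ a (x : L), proj a x ∈ ms a) {w : L} (hw : w = ∑ a, proj a w)
    {c : Fin N} {z : L} (hz : z ∈ ms c) :
    killingForm ℝ L (proj c w) z = killingForm ℝ L w z := by
  conv_rhs => rw [hw, map_sum, LinearMap.sum_apply]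
  rw [Finset.sum_eq_single c]
  · exact fun d _ hdc => horth d c hdc _ (hproj_mem d w) z hz
  · simp

end DiagonalKillingForm

theorem stmt_1_general
    (L : Type*) [LieRing L] [LieAlgebra ℝ L]
    (K : LieSubalgebra ℝ L) (m : Submodule ℝ L)
    (hkm : ∀ x ∈ K, ∀ y ∈ m, killingForm ℝ L x y = 0)
    (hcompl : IsCompl K.toSubmodule m)
    (N : ℕ) (ms : Fin N → Submodule ℝ L)
    (hms : ∀ a, ms a ≤ m)
    (horth : ∀ a b, a ≠ b → ∀ x ∈ ms a, ∀ y ∈ ms b, killingForm ℝ L x y = 0)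
    (proj : Fin N → (L →ₗ[ℝ] L))
    (hproj_mem : ∀ a (x : L), proj a x ∈ ms a)
    (hproj_id : ∀ a, ∀ x ∈ ms a, proj a x = x)
    (hproj_zero : ∀ a b, a ≠ b → ∀ x ∈ ms b, proj a x = 0)
    (hdecomp : ∀ x ∈ m, x = ∑ a, proj a x)
    (lam : Fin N → ℝ) :
    (∀ X ∈ m, ∀ Y ∈ m, ∀ Z ∈ m,
        diagKillingForm proj lam
          ((Submodule.linearProjOfIsCompl m K.toSubmodule hcompl.symm ⁅X, Y⁆ : L)) Z
        + diagKillingForm proj lam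
          ((Submodule.linearProjOfIsCompl m K.toSubmodule hcompl.symm ⁅Y, Z⁆ : L)) X
        + diagKillingForm proj lam
          ((Submodule.linearProjOfIsCompl m K.toSubmodule hcompl.symm ⁅Z, X⁆ : L)) Y = 0)
      ↔ (∀ a b c, ∀ x ∈ ms a, ∀ y ∈ ms b, ∀ z ∈ ms c,
          (lam a + lam b + lam c) * killingForm ℝ L ⁅x, y⁆ z = 0) := by
  set P := m.projection K.toSubmodule hcompl.symm
  have hmetric : ∀ (u : L) (c : Fin N), ∀ z ∈ ms c,
      diagKillingForm proj lam (P u) z = lam c * killingForm ℝ L u z := fun u c z hz => by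
    rw [diagKillingForm_eq_of_mem lam hproj_id hproj_zero _ hz,
      killingForm_proj_apply_of_mem horth hproj_mem
        (hdecomp _ (Submodule.projection_apply_mem _ _)) hz,
      LinearMap.BilinForm.apply_projection_left _ _ hkm _ (hms c hz)]
  let T : L →ₗ[ℝ] L →ₗ[ℝ] L →ₗ[ℝ] ℝ :=
    (LieModule.toEnd ℝ L L : L →ₗ[ℝ] Module.End ℝ L).compr₂ (diagForm proj lam ∘ₗ P)
  have hT : ∀ X Y Z, T.cyclicSum X Y Z = diagKillingForm proj lam (P ⁅X, Y⁆) Z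
      + diagKillingForm proj lam (P ⁅Y, Z⁆) X + diagKillingForm proj lam (P ⁅Z, X⁆) Y :=
    fun X Y Z => by simp [T, diagForm_apply]
  have hblocks : ∀ a b c, ∀ x ∈ ms a, ∀ y ∈ ms b, ∀ z ∈ ms c,
      T.cyclicSum x y z = (lam a + lam b + lam c) * killingForm ℝ L ⁅x, y⁆ z := by
    intro a b c x hx y hy z hz
    rw [hT, hmetric _ _ _ hx, hmetric _ _ _ hy, hmetric _ _ _ hz,
      ← LieModule.traceForm_lie_apply_cycle ℝ L L x y z,
      LieModule.traceForm_lie_apply_cycle ℝ L L z x y]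
    ring
  have hspan : m ≤ ⨆ a, ms a := fun x hx =>
    hdecomp x hx ▸ Submodule.sum_mem_iSup fun a => hproj_mem a x
  constructor
  · intro H a b c x hx y hy z hz
    rw [← hblocks a b c x hx y hy z hz, hT]
    exact H x (hms a hx) y (hms b hy) z (hms c hz)
  · intro H X hX Y hY Z hZ
    have := T.cyclicSum.apply_eq_zero_of_mem_iSup ms ms ms
      (fun a b c x hx y hy z hz => (hblocks a b c x hx y hy z hz).trans (H a b c x hx y hy z hz))
      (hspan hX) (hspan hY) (hspan hZ)
    rwa [hT] at this

/-- criterion `(λ_a + λ_b + λ_c) · B([x,y],z) = 0` for the diagonal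
metric `⟨x,y⟩ = ∑ λ_a B(x_a, y_a)` on `𝔪 = 𝔪₁ ⊕ ⋯ ⊕ 𝔪_N` to satisfy the cyclic
condition (Proposition 4.2 of the paper). -/
theorem stmt_1
    (L : Type*) [LieRing L] [LieAlgebra ℝ L] [FiniteDimensional ℝ L]
    (K : LieSubalgebra ℝ L) (m : Submodule ℝ L)
    (hkm : ∀ x ∈ K, ∀ y ∈ m, killingForm ℝ L x y = 0)
    (hcompl : IsCompl K.toSubmodule m)
    (N : ℕ) (ms : Fin N → Submodule ℝ L)
    (hms : ∀ a, ms a ≤ m)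
    (horth : ∀ a b, a ≠ b → ∀ x ∈ ms a, ∀ y ∈ ms b, killingForm ℝ L x y = 0)
    (proj : Fin N → (L →ₗ[ℝ] L))
    (hproj_mem : ∀ a (x : L), proj a x ∈ ms a)
    (hproj_id : ∀ a, ∀ x ∈ ms a, proj a x = x)
    (hproj_zero : ∀ a b, a ≠ b → ∀ x ∈ ms b, proj a x = 0)
    (hdecomp : ∀ x ∈ m, x = ∑ a, proj a x)
    (lam : Fin N → ℝ) (hlam : ∀ a, lam a ≠ 0)
    (hpos : ∀ x ∈ m, x ≠ 0 → 0 < diagKillingForm proj lam x x) :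
    (∀ X ∈ m, ∀ Y ∈ m, ∀ Z ∈ m,
        diagKillingForm proj lam
          ((Submodule.linearProjOfIsCompl m K.toSubmodule hcompl.symm ⁅X, Y⁆ : L)) Z
        + diagKillingForm proj lam
          ((Submodule.linearProjOfIsCompl m K.toSubmodule hcompl.symm ⁅Y, Z⁆ : L)) X
        + diagKillingForm proj lam
          ((Submodule.linearProjOfIsCompl m K.toSubmodule hcompl.symm ⁅Z, X⁆ : L)) Y = 0)
      ↔ (∀ a b c, ∀ x ∈ ms a, ∀ y ∈ ms b, ∀ z ∈ ms c,
          (lam a + lam b + lam c) * killingForm ℝ L ⁅x, y⁆ z = 0) :=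
  stmt_1_general L K m hkm hcompl N ms hms horth proj hproj_mem hproj_id hproj_zero hdecomp lam
end

section
/- Let 𝔤 be a finite-dimensional real Lie algebra with Killing form B. Let 𝔩 ⊆ 𝔤 be a Lie subalgebra on which B is negative definite, let 𝔭 be the B-orthogonal complement of 𝔩 in 𝔤, and assume B is positive definite on 𝔭, [𝔩,𝔭] ⊆ 𝔭 and [𝔭,𝔭] ⊆ 𝔩 (a Cartan decomposition). Let 𝔨 ⊆ 𝔩 be a Lie subalgebra, let 𝔣 be the B-orthogonal complement of 𝔨 in 𝔩, and set 𝔪 = 𝔣 ⊕ 𝔭, so that 𝔤 = 𝔨 ⊕ 𝔪. Then there exists an inner product ⟨·,·⟩ on 𝔪 with ⟨𝔣,𝔭⟩ = 0 which is ad(𝔨)-invariant (i.e., ⟨[k,x],y⟩ + ⟨x,[k,y]⟩ = 0 for all k ∈ 𝔨 and x,y ∈ 𝔪) and satisfies the cyclic condition, if and only if [𝔣,𝔣] ⊆ 𝔨. -/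
/-!
For `⇒`, let `μ(x, y) = [x, y]_𝔪` on `𝔣`; it takes values in `𝔣`, and `σ(x, y, z) = B(μ(x, y), z)`
is invariant under cyclic permutations. Pair `σ` with `τ(x, y, z) = ⟨μ(x, y), z⟩` in a
`⟨·,·⟩`-orthonormal basis `(eᵢ)` of `𝔣`: by the cyclic invariance of `σ`, the cyclic condition
gives `3 ⟨τ, σ⟩ = 0`, while `⟨τ, σ⟩ = ∑ᵢⱼ B(μ(eᵢ, eⱼ), μ(eᵢ, eⱼ))` is a sum of nonpositive terms.
Hence `μ = 0`, i.e. `[𝔣, 𝔣] ⊆ 𝔨`.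

For `⇐`, take `⟨x, y⟩ = B(x_𝔭, y_𝔭) - 2 B(x_𝔣, y_𝔣)`. When `[𝔣, 𝔣] ⊆ 𝔨`, the invariance of `B`
turns `⟨[X, Y]_𝔪, Z⟩` into `ψ(Y, Z, X) + ψ(Z, X, Y) - 2 ψ(X, Y, Z)` with
`ψ(X, Y, Z) = B([X_𝔭, Y_𝔭], Z_𝔣)`, whose cyclic sum vanishes.
-/

open Module

theorem Finset.sum_sum_sum_rotate {ι M : Type*} [Fintype ι] [AddCommMonoid M]
    (G : ι → ι → ι → M) : ∑ i, ∑ j, ∑ m, G j m i = ∑ i, ∑ j, ∑ m, G i j m := by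
  rw [Finset.sum_comm]
  exact Finset.sum_congr rfl fun _ _ => Finset.sum_comm

namespace LinearMap.BilinForm

variable {V : Type*} [AddCommGroup V] [Module ℝ V] {Φ : LinearMap.BilinForm ℝ V}

theorem exists_orthonormal_basis_of_pos [FiniteDimensional ℝ V] (hΦ : LinearMap.IsSymm Φ)
    (hpos : ∀ x, x ≠ 0 → 0 < Φ x x) :
    ∃ b : Basis (Fin (finrank ℝ V)) ℝ V, ∀ i j, Φ (b i) (b j) = if i = j then 1 else 0 := by
  obtain ⟨v, hv⟩ := exists_orthogonal_basis hΦ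
  have hc : ∀ i, 0 < Φ (v i) (v i) := fun i => hpos _ (v.ne_zero i)
  refine ⟨v.isUnitSMul (w := fun i => (√(Φ (v i) (v i)))⁻¹) fun i => ?_, fun i j => ?_⟩
  · exact (inv_pos.mpr (Real.sqrt_pos.mpr (hc i))).ne'.isUnit
  simp only [Basis.isUnitSMul_apply, map_smul, smul_apply, smul_eq_mul]
  split_ifs with hij
  · subst hij
    field_simp
    rw [Real.sq_sqrt (hc i).le, div_self (hc i).ne']
  · rw [hv hij, mul_zero, mul_zero]

variable {ι : Type*} [Fintype ι] [DecidableEq ι] {b : Basis ι ℝ V}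

theorem apply_basis_eq_repr (hb : ∀ i j, Φ (b i) (b j) = if i = j then 1 else 0) (x : V)
    (i : ι) : Φ x (b i) = b.repr x i := by
  conv_lhs => rw [← b.sum_repr x]
  simp only [map_sum, map_smul, LinearMap.sum_apply, LinearMap.smul_apply, hb, smul_eq_mul,
    mul_ite, mul_one, mul_zero, Finset.sum_ite_eq', Finset.mem_univ, if_true]

theorem sum_apply_basis_mul_apply_basis (hb : ∀ i j, Φ (b i) (b j) = if i = j then 1 else 0)
    (β : LinearMap.BilinForm ℝ V) (x y : V) : ∑ i, Φ x (b i) * β y (b i) = β y x := by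
  conv_rhs => rw [← b.sum_repr x]
  simp only [apply_basis_eq_repr hb, map_sum, map_smul, smul_eq_mul]

end LinearMap.BilinForm

open LinearMap.BilinForm in
theorem LinearMap.eq_zero_of_cyclic_of_invariant {V : Type*} [AddCommGroup V] [Module ℝ V]
    [FiniteDimensional ℝ V] {Φ β : LinearMap.BilinForm ℝ V} (μ : V →ₗ[ℝ] V →ₗ[ℝ] V)
    (hΦ : LinearMap.IsSymm Φ) (hΦpos : ∀ x, x ≠ 0 → 0 < Φ x x) (hβneg : ∀ x, x ≠ 0 → β x x < 0)
    (hβ : ∀ x y z, β (μ x y) z = β (μ y z) x)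
    (hcyc : ∀ x y z, Φ (μ x y) z + Φ (μ y z) x + Φ (μ z x) y = 0) : μ = 0 := by
  obtain ⟨b, hb⟩ := exists_orthonormal_basis_of_pos hΦ hΦpos
  set τ := fun i j m => Φ (μ (b i) (b j)) (b m)
  set σ := fun i j m => β (μ (b i) (b j)) (b m)
  set G := fun i j m => τ i j m * σ i j m
  have hT : ∑ i, ∑ j, ∑ m, G i j m = 0 := by
    have hsum : ∑ i, ∑ j, ∑ m, (τ i j m + τ j m i + τ m i j) * σ i j m = 0 := by
      simp [τ, hcyc]
    have hrot₁ := Finset.sum_sum_sum_rotate G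
    have hrot₂ := Finset.sum_sum_sum_rotate fun i j m => G m i j
    have hsplit : ∑ i, ∑ j, ∑ m, (τ i j m + τ j m i + τ m i j) * σ i j m =
        ∑ i, ∑ j, ∑ m, G i j m + ∑ i, ∑ j, ∑ m, G j m i + ∑ i, ∑ j, ∑ m, G m i j := by
      simp only [← Finset.sum_add_distrib]
      refine Finset.sum_congr rfl fun i _ => Finset.sum_congr rfl fun j _ =>
        Finset.sum_congr rfl fun m _ => ?_
      linear_combination τ j m i * hβ (b i) (b j) (b m) - τ m i j * hβ (b m) (b i) (b j)
    linarith
  have hsq : ∑ i, ∑ j, β (μ (b i) (b j)) (μ (b i) (b j)) = 0 := by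
    simpa [G, τ, σ, sum_apply_basis_mul_apply_basis hb] using hT
  have hle : ∀ x, β x x ≤ 0 := fun x => by
    rcases eq_or_ne x 0 with rfl | hx
    · simp
    · exact (hβneg x hx).le
  refine LinearMap.ext_basis b b fun i j => ?_
  by_contra hne
  have := (Finset.sum_eq_zero_iff_of_nonpos fun i _ => Finset.sum_nonpos fun j _ => hle _).1 hsq i
    (Finset.mem_univ i)
  rw [Finset.sum_eq_zero_iff_of_nonpos fun j _ => hle _] at this
  exact (hβneg _ hne).ne (this j (Finset.mem_univ j))

theorem LinearMap.BilinForm.disjoint_of_orthogonal_of_pos {R E : Type*} [CommRing R]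
    [PartialOrder R] [AddCommGroup E] [Module R E] (B : LinearMap.BilinForm R E)
    {U W : Submodule R E}
    (hUW : ∀ x ∈ U, ∀ y ∈ W, B x y = 0) (hW : ∀ y ∈ W, y ≠ 0 → 0 < B y y) : Disjoint U W := by
  refine Submodule.disjoint_def.2 fun x hxU hxW => ?_
  by_contra hx
  exact (hW x hxW hx).ne' (hUW x hxU x hxW)

theorem LinearMap.BilinForm.apply_projectionOnto_eq {R E : Type*} [CommRing R] [AddCommGroup E]
    [Module R E] (B : LinearMap.BilinForm R E) {m K : Submodule R E} (hK : IsCompl m K) {z : E}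
    (hKz : ∀ c ∈ K, B c z = 0) (w : E) : B (m.projectionOnto K hK w) z = B w z := by
  have := hKz _ (Submodule.sub_projection_mem hK w)
  rwa [map_sub, LinearMap.sub_apply, sub_eq_zero, eq_comm] at this

namespace Submodule

variable {R E : Type*} [Ring R] [AddCommGroup E] [Module R E] {U W : Submodule R E}

theorem exists_sup_projections (h : Disjoint U W) :
    ∃ πU πW : ↥(U ⊔ W) →ₗ[R] E, ∀ x, πU x ∈ U ∧ πW x ∈ W ∧ πU x + πW x = x := by
  set U₁ := U.comap (U ⊔ W).subtype
  set W₁ := W.comap (U ⊔ W).subtype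
  have hc : IsCompl U₁ W₁ := by
    refine ⟨disjoint_def.2 fun x hxU hxW => Subtype.ext (disjoint_def.1 h x hxU hxW), ?_⟩
    refine codisjoint_iff_le_sup.2 fun x _ => ?_
    obtain ⟨u, hu, w, hw, hx⟩ := mem_sup.1 x.2
    exact mem_sup.2 ⟨⟨u, mem_sup_left hu⟩, hu, ⟨w, mem_sup_right hw⟩, hw, Subtype.ext hx⟩
  refine ⟨(U ⊔ W).subtype ∘ₗ U₁.projection W₁ hc, (U ⊔ W).subtype ∘ₗ W₁.projection U₁ hc.symm,
    fun x => ⟨projection_apply_mem hc x, projection_apply_mem hc.symm x, ?_⟩⟩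
  simp only [LinearMap.comp_apply, subtype_apply, ← coe_add, projection_add_projection_eq_self]

theorem sup_projections_eq (h : Disjoint U W) {πU πW : ↥(U ⊔ W) →ₗ[R] E}
    (hπ : ∀ x, πU x ∈ U ∧ πW x ∈ W ∧ πU x + πW x = x) {x : ↥(U ⊔ W)} {u w : E} (hu : u ∈ U)
    (hw : w ∈ W) (hx : (x : E) = u + w) : πU x = u ∧ πW x = w := by
  obtain ⟨hxU, hxW, hsum⟩ := hπ x
  have hd : πU x - u = w - πW x := by rw [sub_eq_sub_iff_add_eq_add, hsum, hx, add_comm w]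
  have h0 : πU x - u = 0 :=
    disjoint_def.1 h _ (sub_mem hxU hu) (hd ▸ sub_mem hw hxW)
  refine ⟨sub_eq_zero.1 h0, ?_⟩
  rw [h0, eq_comm, sub_eq_zero] at hd
  exact hd.symm

theorem coe_projectionOnto_sup_mem {f p K l : Submodule R E} (hK : IsCompl (f ⊔ p) K)
    (hfl : f ≤ l) (hKl : K ≤ l) (hlp : Disjoint l p) {w : E} (hw : w ∈ l) :
    ((f ⊔ p).projectionOnto K hK w : E) ∈ f := by
  have hql : ((f ⊔ p).projectionOnto K hK w : E) ∈ l := by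
    simpa using sub_mem hw (hKl (sub_projection_mem hK w))
  have : (f ⊔ p) ⊓ l = f := by
    rw [sup_inf_assoc_of_le p hfl, inf_comm, hlp.eq_bot, sup_bot_eq]
  exact this.le (mem_inf.2 ⟨coe_mem _, hql⟩)

end Submodule

theorem killingForm_lie_cycle {R L : Type*} [CommRing R] [LieRing L] [LieAlgebra R L]
    (a b c : L) : killingForm R L ⁅a, b⁆ c = killingForm R L ⁅b, c⁆ a := by
  rw [LieModule.traceForm_apply_lie_apply, LieModule.traceForm_comm]

section CartanDecomposition

variable {L : Type*} [LieRing L] [LieAlgebra ℝ L]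

theorem lie_mem_of_cyclic [FiniteDimensional ℝ L] {l : LieSubalgebra ℝ L} {K f p : Submodule ℝ L}
    (hK : IsCompl (f ⊔ p) K) (hfl : f ≤ l.toSubmodule)
    (hfneg : ∀ x ∈ f, x ≠ 0 → killingForm ℝ L x x < 0)
    (hqf : ∀ w ∈ l, ((f ⊔ p).projectionOnto K hK w : L) ∈ f)
    (hqB : ∀ w, ∀ z ∈ f,
      killingForm ℝ L ((f ⊔ p).projectionOnto K hK w) z = killingForm ℝ L w z)
    (Φ : LinearMap.BilinForm ℝ ↥(f ⊔ p)) (hΦ : ∀ x y, Φ x y = Φ y x)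
    (hΦpos : ∀ x, x ≠ 0 → 0 < Φ x x)
    (hcyc : ∀ X Y Z : ↥(f ⊔ p),
      Φ ((f ⊔ p).projectionOnto K hK ⁅(X : L), (Y : L)⁆) Z
        + Φ ((f ⊔ p).projectionOnto K hK ⁅(Y : L), (Z : L)⁆) X
        + Φ ((f ⊔ p).projectionOnto K hK ⁅(Z : L), (X : L)⁆) Y = 0)
    {x y : L} (hx : x ∈ f) (hy : y ∈ f) : ⁅x, y⁆ ∈ K := by
  set q := (f ⊔ p).projectionOnto K hK
  set ι := Submodule.inclusion (le_sup_left : f ≤ f ⊔ p)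
  set μ : f →ₗ[ℝ] f →ₗ[ℝ] f := LinearMap.codRestrict₂
    ((((LieModule.toEnd ℝ L L : L →ₗ[ℝ] Module.End ℝ L).compl₁₂ f.subtype f.subtype).compr₂
      ((f ⊔ p).subtype ∘ₗ q))) f.subtype f.injective_subtype
    fun x y => ⟨⟨_, hqf _ (l.lie_mem (hfl x.2) (hfl y.2))⟩, rfl⟩
  have hμ : ∀ a b : f, (μ a b : L) = q ⁅(a : L), (b : L)⁆ := fun a b =>
    LinearMap.codRestrict₂_apply _ _ f.injective_subtype _ a b
  have hμ0 : μ = 0 := by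
    refine LinearMap.eq_zero_of_cyclic_of_invariant (Φ := Φ.compl₁₂ ι ι)
      (β := (killingForm ℝ L).compl₁₂ f.subtype f.subtype) μ ⟨fun _ _ => hΦ _ _⟩
      (fun z hz => hΦpos _ fun h => hz ?_) (fun z hz => hfneg z z.2 (by simpa using hz))
      (fun a b c => ?_) (fun a b c => ?_)
    · simpa [ι] using congr_arg Subtype.val h
    · change killingForm ℝ L (μ a b : L) c = killingForm ℝ L (μ b c : L) a
      rw [hμ, hμ, hqB _ _ c.2, hqB _ _ a.2, killingForm_lie_cycle]
    · have hιμ : ∀ a b : f, ι (μ a b) = q ⁅(a : L), (b : L)⁆ := fun a b => Subtype.ext (hμ a b)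
      simp only [LinearMap.compl₁₂_apply, hιμ]
      exact hcyc (ι a) (ι b) (ι c)
  have hq0 : q ⁅x, y⁆ = 0 := by
    simpa [hμ] using congr_arg (fun g => (g ⟨x, hx⟩ ⟨y, hy⟩ : L)) hμ0
  exact (Submodule.projectionOnto_apply_eq_zero_iff hK).1 hq0

noncomputable def cyclicForm {M : Type*} [AddCommGroup M] [Module ℝ M] (πf πp : M →ₗ[ℝ] L) :
    LinearMap.BilinForm ℝ M :=
  (killingForm ℝ L).compl₁₂ πp πp - (2 : ℝ) • (killingForm ℝ L).compl₁₂ πf πf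

theorem cyclicForm_apply {M : Type*} [AddCommGroup M] [Module ℝ M] (πf πp : M →ₗ[ℝ] L)
    (x y : M) : cyclicForm πf πp x y =
      killingForm ℝ L (πp x) (πp y) - 2 * killingForm ℝ L (πf x) (πf y) := by
  simp [cyclicForm]

theorem cyclicForm_comm {M : Type*} [AddCommGroup M] [Module ℝ M] (πf πp : M →ₗ[ℝ] L)
    (x y : M) : cyclicForm πf πp x y = cyclicForm πf πp y x := by
  rw [cyclicForm_apply, cyclicForm_apply, LieModule.traceForm_comm ℝ L L (πp x),
    LieModule.traceForm_comm ℝ L L (πf x)]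

variable {f p : Submodule ℝ L} {πf πp : ↥(f ⊔ p) →ₗ[ℝ] L}

theorem cyclicForm_pos (hfneg : ∀ x ∈ f, x ≠ 0 → killingForm ℝ L x x < 0)
    (hppos : ∀ x ∈ p, x ≠ 0 → 0 < killingForm ℝ L x x)
    (hπ : ∀ x, πf x ∈ f ∧ πp x ∈ p ∧ πf x + πp x = x) {x : ↥(f ⊔ p)} (hx : x ≠ 0) :
    0 < cyclicForm πf πp x x := by
  obtain ⟨hxf, hxp, hsum⟩ := hπ x
  have hf0 : killingForm ℝ L (πf x) (πf x) ≤ 0 := by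
    rcases eq_or_ne (πf x) 0 with h | h
    · simp [h]
    · exact (hfneg _ hxf h).le
  have hp0 : 0 ≤ killingForm ℝ L (πp x) (πp x) := by
    rcases eq_or_ne (πp x) 0 with h | h
    · simp [h]
    · exact (hppos _ hxp h).le
  rw [cyclicForm_apply]
  rcases eq_or_ne (πf x) 0 with h | h
  · have hp : πp x ≠ 0 := fun h' => hx (Subtype.ext (by simp [← hsum, h, h']))
    linarith [hppos _ hxp hp]
  · linarith [hfneg _ hxf h]

theorem cyclicForm_eq_zero (hfp : Disjoint f p)
    (hπ : ∀ x, πf x ∈ f ∧ πp x ∈ p ∧ πf x + πp x = x) {x y : ↥(f ⊔ p)} (hx : (x : L) ∈ f)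
    (hy : (y : L) ∈ p) : cyclicForm πf πp x y = 0 := by
  have hxp := (Submodule.sup_projections_eq hfp hπ hx p.zero_mem (add_zero _).symm).2
  have hyf := (Submodule.sup_projections_eq hfp hπ f.zero_mem hy (zero_add _).symm).1
  simp [cyclicForm_apply, hxp, hyf]

theorem cyclicForm_lie_add_cyclicForm_lie (hfp : Disjoint f p)
    (hπ : ∀ x, πf x ∈ f ∧ πp x ∈ p ∧ πf x + πp x = x) {c : L} (hcf : ∀ z ∈ f, ⁅c, z⁆ ∈ f)
    (hcp : ∀ z ∈ p, ⁅c, z⁆ ∈ p) (x y : ↥(f ⊔ p)) (hx : ⁅c, (x : L)⁆ ∈ f ⊔ p)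
    (hy : ⁅c, (y : L)⁆ ∈ f ⊔ p) :
    cyclicForm πf πp ⟨⁅c, (x : L)⁆, hx⟩ y + cyclicForm πf πp x ⟨⁅c, (y : L)⁆, hy⟩ = 0 := by
  have hc : ∀ (z : ↥(f ⊔ p)) (hz : ⁅c, (z : L)⁆ ∈ f ⊔ p),
      πf ⟨_, hz⟩ = ⁅c, πf z⁆ ∧ πp ⟨_, hz⟩ = ⁅c, πp z⁆ := fun z hz =>
    Submodule.sup_projections_eq hfp hπ (hcf _ (hπ z).1) (hcp _ (hπ z).2.1)
      (by rw [← lie_add, (hπ z).2.2])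
  rw [cyclicForm_apply, cyclicForm_apply, (hc x hx).1, (hc x hx).2, (hc y hy).1, (hc y hy).2,
    LieModule.traceForm_apply_lie_apply', LieModule.traceForm_apply_lie_apply']
  ring

theorem cyclicForm_cyclic {l K : Submodule ℝ L} (hK : IsCompl (f ⊔ p) K)
    (hfp : Disjoint f p) (hπ : ∀ x, πf x ∈ f ∧ πp x ∈ p ∧ πf x + πp x = x) (hfl : f ≤ l)
    (hff : ∀ x ∈ f, ∀ y ∈ f, ⁅x, y⁆ ∈ K)
    (hlp : ∀ x ∈ l, ∀ y ∈ p, ⁅x, y⁆ ∈ p) (hpp : ∀ x ∈ p, ∀ y ∈ p, ⁅x, y⁆ ∈ l)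
    (hqf : ∀ w ∈ l, ((f ⊔ p).projectionOnto K hK w : L) ∈ f)
    (hqB : ∀ w, ∀ z ∈ f,
      killingForm ℝ L ((f ⊔ p).projectionOnto K hK w) z = killingForm ℝ L w z)
    (X Y Z : ↥(f ⊔ p)) :
    cyclicForm πf πp ((f ⊔ p).projectionOnto K hK ⁅(X : L), (Y : L)⁆) Z
      + cyclicForm πf πp ((f ⊔ p).projectionOnto K hK ⁅(Y : L), (Z : L)⁆) X
      + cyclicForm πf πp ((f ⊔ p).projectionOnto K hK ⁅(Z : L), (X : L)⁆) Y = 0 := by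
  set q := (f ⊔ p).projectionOnto K hK
  have key : ∀ X Y Z : ↥(f ⊔ p), cyclicForm πf πp (q ⁅(X : L), (Y : L)⁆) Z =
      killingForm ℝ L ⁅πp Y, πp Z⁆ (πf X) + killingForm ℝ L ⁅πp Z, πp X⁆ (πf Y)
        - 2 * killingForm ℝ L ⁅πp X, πp Y⁆ (πf Z) := by
    intro X Y Z
    obtain ⟨hXf, hXp, hX⟩ := hπ X
    obtain ⟨hYf, hYp, hY⟩ := hπ Y
    have hmix : ⁅πf X, πp Y⁆ + ⁅πp X, πf Y⁆ ∈ p := by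
      refine add_mem (hlp _ (hfl hXf) _ hYp) ?_
      rw [← lie_skew]
      exact neg_mem (hlp _ (hfl hYf) _ hXp)
    have hsplit : ⁅(X : L), (Y : L)⁆ =
        ⁅πf X, πf Y⁆ + (⁅πf X, πp Y⁆ + ⁅πp X, πf Y⁆) + ⁅πp X, πp Y⁆ := by
      rw [← hX, ← hY]
      simp only [add_lie, lie_add]
      abel
    have hqXY : (q ⁅(X : L), (Y : L)⁆ : L) =
        q ⁅πp X, πp Y⁆ + (⁅πf X, πp Y⁆ + ⁅πp X, πf Y⁆) := by
      rw [hsplit, map_add, map_add,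
        Submodule.projectionOnto_apply_of_mem_right hK (hff _ hXf _ hYf),
        Submodule.projectionOnto_apply_of_mem_left hK (Submodule.mem_sup_right hmix)]
      simp only [zero_add, Submodule.coe_add]
      abel
    obtain ⟨hf, hp⟩ :=
      Submodule.sup_projections_eq hfp hπ (hqf _ (hpp _ hXp _ hYp)) hmix hqXY
    rw [cyclicForm_apply, hf, hp, hqB _ _ (hπ Z).1, map_add, LinearMap.add_apply,
      killingForm_lie_cycle (πf X), killingForm_lie_cycle (πp X) (πf Y),
      killingForm_lie_cycle (πf Y)]
  rw [key X Y Z, key Y Z X, key Z X Y]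
  ring

end CartanDecomposition

/-- For a Cartan decomposition `𝔤 = 𝔩 ⊕ 𝔭` (Killing form `B` negative
definite on the subalgebra `𝔩`, positive definite on its `B`-orthogonal complement
`𝔭`, with `[𝔩,𝔭] ⊆ 𝔭`, `[𝔭,𝔭] ⊆ 𝔩`), a subalgebra `𝔨 ⊆ 𝔩` with `𝔣` the
`B`-orthogonal complement of `𝔨` in `𝔩`, and `𝔪 = 𝔣 ⊕ 𝔭`: there exists an
`ad(𝔨)`-invariant inner product on `𝔪` with `⟨𝔣,𝔭⟩ = 0` satisfying the cyclic
condition iff `[𝔣,𝔣] ⊆ 𝔨` (Proposition 4.3 of the paper). -/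
theorem stmt_2
    (L : Type*) [LieRing L] [LieAlgebra ℝ L] [FiniteDimensional ℝ L]
    (l : LieSubalgebra ℝ L)
    (hlneg : ∀ x ∈ l, x ≠ 0 → killingForm ℝ L x x < 0)
    (p : Submodule ℝ L)
    (hp : ∀ y : L, y ∈ p ↔ ∀ x ∈ l, killingForm ℝ L x y = 0)
    (hppos : ∀ x ∈ p, x ≠ 0 → 0 < killingForm ℝ L x x)
    (hlp : ∀ x ∈ l, ∀ y ∈ p, ⁅x, y⁆ ∈ p)
    (hpp : ∀ x ∈ p, ∀ y ∈ p, ⁅x, y⁆ ∈ l)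
    (k : LieSubalgebra ℝ L) (hkl : k ≤ l)
    (f : Submodule ℝ L)
    (hf : ∀ y : L, y ∈ f ↔ (y ∈ l ∧ ∀ x ∈ k, killingForm ℝ L x y = 0))
    (hcompl : IsCompl k.toSubmodule (f ⊔ p)) :
    (∃ Φ : ↥(f ⊔ p) →ₗ[ℝ] ↥(f ⊔ p) →ₗ[ℝ] ℝ,
        (∀ x y : ↥(f ⊔ p), Φ x y = Φ y x) ∧
        (∀ x : ↥(f ⊔ p), x ≠ 0 → 0 < Φ x x) ∧
        (∀ x y : ↥(f ⊔ p), (x : L) ∈ f → (y : L) ∈ p → Φ x y = 0) ∧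
        (∀ c ∈ k, ∀ x y : ↥(f ⊔ p),
          ∀ (hx : ⁅c, (x : L)⁆ ∈ f ⊔ p) (hy : ⁅c, (y : L)⁆ ∈ f ⊔ p),
            Φ ⟨⁅c, (x : L)⁆, hx⟩ y + Φ x ⟨⁅c, (y : L)⁆, hy⟩ = 0) ∧
        (∀ X Y Z : ↥(f ⊔ p),
          Φ (Submodule.linearProjOfIsCompl (f ⊔ p) k.toSubmodule hcompl.symm
              ⁅(X : L), (Y : L)⁆) Z
          + Φ (Submodule.linearProjOfIsCompl (f ⊔ p) k.toSubmodule hcompl.symm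
              ⁅(Y : L), (Z : L)⁆) X
          + Φ (Submodule.linearProjOfIsCompl (f ⊔ p) k.toSubmodule hcompl.symm
              ⁅(Z : L), (X : L)⁆) Y = 0))
      ↔ (∀ x ∈ f, ∀ y ∈ f, ⁅x, y⁆ ∈ k) := by
  have hfl : f ≤ l.toSubmodule := fun y hy => ((hf y).1 hy).1
  have hkf : ∀ c ∈ k, ∀ z ∈ f, killingForm ℝ L c z = 0 := fun c hc z hz => ((hf z).1 hz).2 c hc
  have hfneg : ∀ x ∈ f, x ≠ 0 → killingForm ℝ L x x < 0 := fun x hx => hlneg x (hfl hx)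
  have hdisj : Disjoint l.toSubmodule p :=
    (killingForm ℝ L).disjoint_of_orthogonal_of_pos (fun x hx y hy => (hp y).1 hy x hx) hppos
  have hqf : ∀ w ∈ l, ((f ⊔ p).projectionOnto k hcompl.symm w : L) ∈ f := fun _ =>
    Submodule.coe_projectionOnto_sup_mem hcompl.symm hfl hkl hdisj
  have hqB : ∀ w, ∀ z ∈ f, killingForm ℝ L ((f ⊔ p).projectionOnto k hcompl.symm w) z =
      killingForm ℝ L w z := fun w z hz =>
    (killingForm ℝ L).apply_projectionOnto_eq hcompl.symm (fun c hc => hkf c hc z hz) w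
  constructor
  · rintro ⟨Φ, hΦ, hΦpos, -, -, hcyc⟩ x hx y hy
    exact lie_mem_of_cyclic hcompl.symm hfl hfneg hqf hqB Φ hΦ hΦpos hcyc hx hy
  · intro hff
    have hfp : Disjoint f p := hdisj.mono_left hfl
    have hkf' : ∀ c ∈ k, ∀ z ∈ f, ⁅c, z⁆ ∈ f := fun c hc z hz =>
      (hf _).2 ⟨l.lie_mem (hkl hc) (hfl hz), fun c' hc' => by
        rw [← LieModule.traceForm_apply_lie_apply]
        exact hkf _ (k.lie_mem hc' hc) z hz⟩
    obtain ⟨πf, πp, hπ⟩ := Submodule.exists_sup_projections hfp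
    exact ⟨cyclicForm πf πp, cyclicForm_comm πf πp, fun _ => cyclicForm_pos hfneg hppos hπ,
      fun _ _ => cyclicForm_eq_zero hfp hπ,
      fun c hc => cyclicForm_lie_add_cyclicForm_lie hfp hπ (hkf' c hc) (hlp c (hkl hc)),
      cyclicForm_cyclic hcompl.symm hfp hπ hfl hff hlp hpp hqf hqB⟩
end

section
/- Let K be a compact topological group, V a finite-dimensional real vector space, and ρ : K → GL(V) a continuous representation. Let B be a ρ(K)-invariant nondegenerate symmetric bilinear form on V, and let V = 𝔣 ⊕ 𝔭 be a B-orthogonal direct sum decomposition into ρ(K)-invariant subspaces such that B is negative definite on 𝔣 and positive definite on 𝔭. Let ⟨·,·⟩ be a ρ(K)-invariant inner product on V with ⟨𝔣,𝔭⟩ = 0. Then there exist a direct sum decomposition V = V₁ ⊕ ⋯ ⊕ V_m into ρ(K)-invariant subspaces, each contained in 𝔣 or in 𝔭, which are pairwise orthogonal with respect to both ⟨·,·⟩ and B and on each of which K acts irreducibly, together with nonzero real numbers λ₁,…,λ_m such that ⟨x,y⟩ = λ_i B(x,y) for all x,y ∈ V_i, where λ_i < 0 whenever V_i ⊆ 𝔣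 and λ_i > 0 whenever V_i ⊆ 𝔭. -/
/-!
Maximising the Rayleigh quotient `B x x / Φ x x` over a nonzero invariant subspace `S` gives
`r` and a nonzero subspace `E ≤ S` on which `B x y = r * Φ x y` for all `y ∈ S`. Since both forms
are invariant, so is `E`, and any minimal nonzero invariant subspace `W ≤ E` is irreducible. The
`Φ`-orthogonal complement of `W` in `S` is invariant and `B`-orthogonal to `W`, so well-founded
induction on `S` splits `f` and `p` separately into such pieces. On a piece of `f` (resp. `p`) the
sign of `B` forces `r < 0` (resp. `r > 0`), and `λ = r⁻¹`.
-/

section Forms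

variable {V : Type*} [AddCommGroup V] [Module ℝ V] {B Φ : LinearMap.BilinForm ℝ V}

lemma LinearMap.BilinForm.apply_eq_zero_of_apply_self_eq_zero {D : LinearMap.BilinForm ℝ V}
    (hsymm : ∀ x y, D x y = D y x) (hnonneg : ∀ x, 0 ≤ D x x) {x : V} (hx : D x x = 0)
    (y : V) : D x y = 0 := by
  have hquad : ∀ t : ℝ, 0 ≤ D y y * (t * t) + 2 * D x y * t + 0 := fun t => by
    have := hnonneg (x + t • y)
    simp only [map_add, map_smul, LinearMap.add_apply, LinearMap.smul_apply, smul_eq_mul,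
      hx, hsymm y x] at this
    linarith
  have := discrim_le_zero hquad
  rw [discrim] at this
  nlinarith [sq_nonneg (D x y)]

lemma LinearMap.BilinForm.isCompl_orthogonal_of_pos [FiniteDimensional ℝ V]
    (hsymm : ∀ x y, Φ x y = Φ y x) (hpos : ∀ x, x ≠ 0 → 0 < Φ x x) (W : Submodule ℝ V) :
    IsCompl W (Φ.orthogonal W) := by
  refine (Φ.isCompl_orthogonal_iff_disjoint fun x y h => (hsymm y x).trans h).mpr ?_
  refine Submodule.disjoint_def.mpr fun x hxW hx => ?_
  by_contra hx0
  exact (hpos x hx0).ne' (hx x hxW)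

lemma LinearMap.BilinForm.iSupIndep_of_orthogonal (hpos : ∀ x, x ≠ 0 → 0 < Φ x x)
    {ι : Type*} {W : ι → Submodule ℝ V} (horth : ∀ i j, i ≠ j → ∀ x ∈ W i, ∀ y ∈ W j, Φ x y = 0) :
    iSupIndep W := by
  intro i
  refine Submodule.disjoint_def.mpr fun x hxi hx => ?_
  have hle : ⨆ j, ⨆ _ : j ≠ i, W j ≤ Φ.orthogonal (W i) :=
    iSup₂_le fun j hji y hy n hn => horth i j (Ne.symm hji) n hn y hy
  by_contra hx0
  exact (hpos x hx0).ne' (hle hx x hxi)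

def IsBiOrtho (Φ B : LinearMap.BilinForm ℝ V) (W W' : Submodule ℝ V) : Prop :=
  ∀ x ∈ W, ∀ y ∈ W', Φ x y = 0 ∧ B x y = 0

lemma IsBiOrtho.symm (hΦsymm : ∀ x y, Φ x y = Φ y x) (hBsymm : ∀ x y, B x y = B y x)
    {W W' : Submodule ℝ V} (h : IsBiOrtho Φ B W W') :
    IsBiOrtho Φ B W' W := fun x hx y hy => by
  rw [hΦsymm, hBsymm]
  exact h y hy x hx

lemma apply_eq_inv_mul_of_apply_eq_mul {W : Submodule ℝ V} (hW0 : W ≠ ⊥)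
    (hB : ∀ x ∈ W, x ≠ 0 → B x x ≠ 0) {μ : ℝ} (hμ : ∀ x ∈ W, ∀ y ∈ W, B x y = μ * Φ x y) :
    ∀ x ∈ W, ∀ y ∈ W, Φ x y = μ⁻¹ * B x y := by
  obtain ⟨z, hz, hz0⟩ := Submodule.exists_mem_ne_zero_of_ne_bot hW0
  have hμ0 : μ ≠ 0 := fun h => hB z hz hz0 (by rw [hμ z hz z hz, h, zero_mul])
  intro x hx y hy
  rw [hμ x hx y hy, inv_mul_cancel_left₀ hμ0]

lemma neg_of_apply_self_eq_mul {W : Submodule ℝ V} (hW0 : W ≠ ⊥)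
    (hΦpos : ∀ x, x ≠ 0 → 0 < Φ x x) (hB : ∀ x ∈ W, x ≠ 0 → B x x < 0) {lam : ℝ}
    (hlam : ∀ x ∈ W, Φ x x = lam * B x x) : lam < 0 := by
  obtain ⟨z, hz, hz0⟩ := Submodule.exists_mem_ne_zero_of_ne_bot hW0
  have := hΦpos z hz0
  rw [hlam z hz] at this
  exact neg_of_mul_pos_left this (hB z hz hz0).le

lemma pos_of_apply_self_eq_mul {W : Submodule ℝ V} (hW0 : W ≠ ⊥)
    (hΦpos : ∀ x, x ≠ 0 → 0 < Φ x x) (hB : ∀ x ∈ W, x ≠ 0 → 0 < B x x) {lam : ℝ}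
    (hlam : ∀ x ∈ W, Φ x x = lam * B x x) : 0 < lam := by
  obtain ⟨z, hz, hz0⟩ := Submodule.exists_mem_ne_zero_of_ne_bot hW0
  have := hΦpos z hz0
  rw [hlam z hz] at this
  exact pos_of_mul_pos_left this (hB z hz hz0).le

lemma exists_fin_isInternal_of_finset (hΦpos : ∀ x, x ≠ 0 → 0 < Φ x x)
    {P : Submodule ℝ V → Prop} (𝒲 : Finset (Submodule ℝ V))
    (hsup : sSup (𝒲 : Set (Submodule ℝ V)) = ⊤)
    (hpair : (𝒲 : Set (Submodule ℝ V)).Pairwise (IsBiOrtho Φ B)) (hP : ∀ W ∈ 𝒲, P W) :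
    ∃ (m : ℕ) (W : Fin m → Submodule ℝ V), DirectSum.IsInternal W ∧
      (∀ i j, i ≠ j → IsBiOrtho Φ B (W i) (W j)) ∧ ∀ i, P (W i) := by
  set e := 𝒲.equivFin.symm
  have horth : ∀ i j, i ≠ j → IsBiOrtho Φ B (e i) (e j) := fun i j hij =>
    hpair (e i).2 (e j).2 fun h => hij (e.injective (Subtype.ext h))
  refine ⟨𝒲.card, fun i => e i, ?_, horth, fun i => hP _ (e i).2⟩
  rw [DirectSum.isInternal_submodule_iff_iSupIndep_and_iSup_eq_top]
  refine ⟨LinearMap.BilinForm.iSupIndep_of_orthogonal hΦpos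
    fun i j hij x hx y hy => (horth i j hij x hx y hy).1, ?_⟩
  rw [e.iSup_comp (g := fun W : 𝒲 => (W : Submodule ℝ V)), ← hsup, sSup_eq_iSup']
  rfl

end Forms

section Rayleigh

variable {V : Type*} [NormedAddCommGroup V] [NormedSpace ℝ V] [FiniteDimensional ℝ V]

lemma LinearMap.BilinForm.continuous_apply_self (D : LinearMap.BilinForm ℝ V) :
    Continuous fun x => D x x := by
  simpa using D.toContinuousBilinearMap.continuous.clm_apply continuous_id

lemma exists_ne_zero_forall_apply_eq_mul [Nontrivial V] {B Φ : LinearMap.BilinForm ℝ V}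
    (hBsymm : ∀ x y, B x y = B y x) (hΦsymm : ∀ x y, Φ x y = Φ y x)
    (hΦpos : ∀ x, x ≠ 0 → 0 < Φ x x) :
    ∃ (r : ℝ) (x₀ : V), x₀ ≠ 0 ∧ ∀ y, B x₀ y = r * Φ x₀ y := by
  set q : V → ℝ := fun x => B x x / Φ x x
  have hq_smul : ∀ (c : ℝ) x, c ≠ 0 → q (c • x) = q x := fun c x hc => by
    simp only [q, map_smul, LinearMap.smul_apply, smul_eq_mul, ← mul_assoc]
    exact mul_div_mul_left _ _ (mul_ne_zero hc hc)
  have hsphere : ∀ x ∈ Metric.sphere (0 : V) 1, x ≠ 0 := fun x hx =>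
    ne_zero_of_mem_unit_sphere ⟨x, hx⟩
  have hcont : ContinuousOn q (Metric.sphere 0 1) :=
    (B.continuous_apply_self.continuousOn).div Φ.continuous_apply_self.continuousOn
      fun x hx => (hΦpos x (hsphere x hx)).ne'
  obtain ⟨x₀, hx₀, hmax⟩ := (isCompact_sphere (0 : V) 1).exists_isMaxOn
    (NormedSpace.sphere_nonempty.mpr zero_le_one) hcont
  have hle : ∀ x, B x x ≤ q x₀ * Φ x x := fun x => by
    rcases eq_or_ne x 0 with rfl | hx
    · simp
    have hnorm : ‖x‖⁻¹ ≠ 0 := inv_ne_zero (norm_ne_zero_iff.mpr hx)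
    have := hmax (show ‖x‖⁻¹ • x ∈ Metric.sphere (0 : V) 1 by simp [norm_smul, hx])
    rw [Set.mem_ofPred_eq, hq_smul _ _ hnorm] at this
    exact (div_le_iff₀ (hΦpos x hx)).mp this
  set D : LinearMap.BilinForm ℝ V := q x₀ • Φ - B
  have hD : ∀ x y, D x y = q x₀ * Φ x y - B x y := fun x y => rfl
  have hDx₀ : D x₀ x₀ = 0 := by
    rw [hD]
    simp only [q]
    field_simp [(hΦpos x₀ (hsphere x₀ hx₀)).ne']
    ring
  refine ⟨q x₀, x₀, hsphere x₀ hx₀, fun y => ?_⟩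
  have := D.apply_eq_zero_of_apply_self_eq_zero (fun x y => by rw [hD, hD, hΦsymm, hBsymm])
    (fun x => by rw [hD]; linarith [hle x]) hDx₀ y
  rw [hD] at this
  linarith

end Rayleigh

section Invariant

variable {K V : Type*} [Group K] [AddCommGroup V] [Module ℝ V] (ρ : Representation ℝ K V)

lemma Representation.mem_invtSubmodule_iff_forall_mem {W : Submodule ℝ V} :
    W ∈ ρ.invtSubmodule ↔ ∀ g, ∀ x ∈ W, ρ g x ∈ W := by
  simp only [ρ.mem_invtSubmodule, Module.End.mem_invtSubmodule_iff_forall_mem_of_mem]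

def Representation.IsIrreducibleSubspace (W : Submodule ℝ V) : Prop :=
  W ∈ ρ.invtSubmodule ∧ W ≠ ⊥ ∧ ∀ U ≤ W, U ∈ ρ.invtSubmodule → U = ⊥ ∨ U = W

lemma Representation.orthogonal_mem_invtSubmodule {D : LinearMap.BilinForm ℝ V}
    (hD : ∀ g x y, D (ρ g x) (ρ g y) = D x y) {W : Submodule ℝ V} (hW : W ∈ ρ.invtSubmodule) :
    D.orthogonal W ∈ ρ.invtSubmodule := by
  rw [ρ.mem_invtSubmodule_iff_forall_mem] at hW ⊢
  intro g y hy w hw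
  rw [← ρ.self_inv_apply g w, hD]
  exact hy _ (hW g⁻¹ w hw)

lemma Representation.exists_isIrreducibleSubspace_le [FiniteDimensional ℝ V]
    {E : Submodule ℝ V} (hE : E ∈ ρ.invtSubmodule) (hE0 : E ≠ ⊥) :
    ∃ W ≤ E, ρ.IsIrreducibleSubspace W := by
  obtain ⟨W, ⟨hWE, hW, hW0⟩, hmin⟩ := wellFounded_lt.has_min
    {W | W ≤ E ∧ W ∈ ρ.invtSubmodule ∧ W ≠ ⊥} ⟨E, le_rfl, hE, hE0⟩
  refine ⟨W, hWE, hW, hW0, fun U hUW hU => ?_⟩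
  by_contra! hne
  exact hmin U ⟨hUW.trans hWE, hU, hne.1⟩ (lt_of_le_of_ne hUW hne.2)

end Invariant

section Decomposition

variable {K V : Type*} [Group K] [NormedAddCommGroup V] [NormedSpace ℝ V]
  [FiniteDimensional ℝ V] (ρ : Representation ℝ K V) {B Φ : LinearMap.BilinForm ℝ V}

lemma Representation.exists_isIrreducibleSubspace_le_forall_apply_eq_mul
    (hBsymm : ∀ x y, B x y = B y x) (hΦsymm : ∀ x y, Φ x y = Φ y x)
    (hΦpos : ∀ x, x ≠ 0 → 0 < Φ x x) (hBinv : ∀ g x y, B (ρ g x) (ρ g y) = B x y)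
    (hΦinv : ∀ g x y, Φ (ρ g x) (ρ g y) = Φ x y) {S : Submodule ℝ V}
    (hS : S ∈ ρ.invtSubmodule) (hS0 : S ≠ ⊥) :
    ∃ (r : ℝ) (W : Submodule ℝ V), W ≤ S ∧ ρ.IsIrreducibleSubspace W ∧
      ∀ x ∈ W, ∀ y ∈ S, B x y = r * Φ x y := by
  have : Nontrivial S := Submodule.nontrivial_iff_ne_bot.mpr hS0
  obtain ⟨r, x₀, hx₀, heig⟩ := exists_ne_zero_forall_apply_eq_mul
    (B := B.restrict S) (Φ := Φ.restrict S) (fun x y => hBsymm x y) (fun x y => hΦsymm x y)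
    fun x hx => hΦpos x (by simpa using hx)
  set D : LinearMap.BilinForm ℝ V := B - r • Φ
  have hD : ∀ x y, D x y = B x y - r * Φ x y := fun x y => rfl
  set E := S ⊓ D.orthogonal S
  have hE : E ∈ ρ.invtSubmodule := ρ.invtSubmodule.inf_mem hS <|
    ρ.orthogonal_mem_invtSubmodule (fun g x y => by rw [hD, hD, hBinv, hΦinv]) hS
  have hx₀E : (x₀ : V) ∈ E := ⟨x₀.2, fun y hy => by
    rw [hD, hBsymm, hΦsymm]
    exact sub_eq_zero.mpr (heig ⟨y, hy⟩)⟩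
  obtain ⟨W, hWE, hW⟩ := ρ.exists_isIrreducibleSubspace_le hE
    fun h => hx₀ (Subtype.ext ((Submodule.mem_bot ℝ).mp (h ▸ hx₀E)))
  refine ⟨r, W, hWE.trans inf_le_left, hW, fun x hx y hy => ?_⟩
  have := (hWE hx).2 y hy
  rw [hD, hBsymm, hΦsymm] at this
  exact sub_eq_zero.mp this

theorem Representation.exists_finset_isIrreducibleSubspace_sSup_eq
    (hBsymm : ∀ x y, B x y = B y x) (hΦsymm : ∀ x y, Φ x y = Φ y x)
    (hΦpos : ∀ x, x ≠ 0 → 0 < Φ x x) (hBinv : ∀ g x y, B (ρ g x) (ρ g y) = B x y)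
    (hΦinv : ∀ g x y, Φ (ρ g x) (ρ g y) = Φ x y) {S : Submodule ℝ V}
    (hS : S ∈ ρ.invtSubmodule) :
    ∃ 𝒲 : Finset (Submodule ℝ V), sSup (𝒲 : Set (Submodule ℝ V)) = S ∧
      (𝒲 : Set (Submodule ℝ V)).Pairwise (IsBiOrtho Φ B) ∧
      ∀ W ∈ 𝒲, ρ.IsIrreducibleSubspace W ∧ ∃ μ : ℝ, ∀ x ∈ W, ∀ y ∈ W, B x y = μ * Φ x y := by
  classical
  induction S using WellFoundedLT.induction with
  | _ S ih =>
  rcases eq_or_ne S ⊥ with rfl | hS0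
  · exact ⟨∅, by simp, by simp, by simp⟩
  obtain ⟨r, W, hWS, hW, heig⟩ := ρ.exists_isIrreducibleSubspace_le_forall_apply_eq_mul
    hBsymm hΦsymm hΦpos hBinv hΦinv hS hS0
  have hcompl := Φ.isCompl_orthogonal_of_pos hΦsymm hΦpos W
  set S' := Φ.orthogonal W ⊓ S
  have hS'S : S' < S := by
    refine lt_of_le_of_ne inf_le_right fun h => hW.2.1 ?_
    exact hcompl.disjoint.eq_bot_of_le ((hWS.trans h.ge).trans inf_le_left)
  obtain ⟨𝒲', hsup, hpair, hpieces⟩ := ih S' hS'S <|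
    ρ.invtSubmodule.inf_mem (ρ.orthogonal_mem_invtSubmodule hΦinv hW.1) hS
  have hW𝒲' : ∀ W' ∈ 𝒲', IsBiOrtho Φ B W W' := fun W' hW' x hx y hy => by
    have hyS' : y ∈ S' := hsup ▸ le_sSup (Finset.mem_coe.mpr hW') hy
    have hΦ : Φ x y = 0 := hyS'.1 x hx
    exact ⟨hΦ, by rw [heig x hx y hyS'.2, hΦ, mul_zero]⟩
  refine ⟨insert W 𝒲', ?_, ?_, ?_⟩
  · rw [Finset.coe_insert, sSup_insert, hsup, ← sup_inf_assoc_of_le _ hWS, hcompl.sup_eq_top,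
      top_inf_eq]
  · rw [Finset.coe_insert, Set.pairwise_insert]
    exact ⟨hpair, fun W' hW' _ =>
      ⟨hW𝒲' W' hW', (hW𝒲' W' hW').symm hΦsymm hBsymm⟩⟩
  · intro W'' hW''
    rcases Finset.mem_insert.mp hW'' with rfl | hW''
    · exact ⟨hW, r, fun x hx y hy => heig x hx y (hWS hy)⟩
    · exact hpieces W'' hW''

theorem Representation.exists_finset_isIrreducibleSubspace_of_isCompl
    (hBsymm : ∀ x y, B x y = B y x) (hΦsymm : ∀ x y, Φ x y = Φ y x)
    (hΦpos : ∀ x, x ≠ 0 → 0 < Φ x x) (hBinv : ∀ g x y, B (ρ g x) (ρ g y) = B x y)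
    (hΦinv : ∀ g x y, Φ (ρ g x) (ρ g y) = Φ x y) {f p : Submodule ℝ V} (hcompl : IsCompl f p)
    (hf : f ∈ ρ.invtSubmodule) (hp : p ∈ ρ.invtSubmodule)
    (horth : ∀ x ∈ f, ∀ y ∈ p, Φ x y = 0 ∧ B x y = 0)
    (hBf : ∀ x ∈ f, x ≠ 0 → B x x ≠ 0) (hBp : ∀ x ∈ p, x ≠ 0 → B x x ≠ 0) :
    ∃ 𝒲 : Finset (Submodule ℝ V), sSup (𝒲 : Set (Submodule ℝ V)) = ⊤ ∧
      (𝒲 : Set (Submodule ℝ V)).Pairwise (IsBiOrtho Φ B) ∧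
      ∀ W ∈ 𝒲, (W ≤ f ∨ W ≤ p) ∧ ρ.IsIrreducibleSubspace W ∧
        ∃ lam : ℝ, ∀ x ∈ W, ∀ y ∈ W, Φ x y = lam * B x y := by
  classical
  obtain ⟨𝒲f, hsupf, hpairf, hpiecesf⟩ := ρ.exists_finset_isIrreducibleSubspace_sSup_eq
    hBsymm hΦsymm hΦpos hBinv hΦinv hf
  obtain ⟨𝒲p, hsupp, hpairp, hpiecesp⟩ := ρ.exists_finset_isIrreducibleSubspace_sSup_eq
    hBsymm hΦsymm hΦpos hBinv hΦinv hp
  have hle_f : ∀ W ∈ 𝒲f, W ≤ f := fun W hW => hsupf ▸ le_sSup (Finset.mem_coe.mpr hW)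
  have hle_p : ∀ W ∈ 𝒲p, W ≤ p := fun W hW => hsupp ▸ le_sSup (Finset.mem_coe.mpr hW)
  refine ⟨𝒲f ∪ 𝒲p, ?_, ?_, ?_⟩
  · rw [Finset.coe_union, sSup_union, hsupf, hsupp, hcompl.sup_eq_top]
  · rw [Finset.coe_union, Set.pairwise_union]
    refine ⟨hpairf, hpairp, fun W hW W' hW' _ => ?_⟩
    have hWW' : IsBiOrtho Φ B W W' := fun x hx y hy =>
      horth x (hle_f W hW hx) y (hle_p W' hW' hy)
    exact ⟨hWW', hWW'.symm hΦsymm hBsymm⟩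
  · intro W hW
    rcases Finset.mem_union.mp hW with hW | hW
    · obtain ⟨hirr, μ, hμ⟩ := hpiecesf W hW
      exact ⟨Or.inl (hle_f W hW), hirr, μ⁻¹, apply_eq_inv_mul_of_apply_eq_mul hirr.2.1
        (fun x hx => hBf x (hle_f W hW hx)) hμ⟩
    · obtain ⟨hirr, μ, hμ⟩ := hpiecesp W hW
      exact ⟨Or.inr (hle_p W hW), hirr, μ⁻¹, apply_eq_inv_mul_of_apply_eq_mul hirr.2.1
        (fun x hx => hBp x (hle_p W hW hx)) hμ⟩

end Decomposition

theorem stmt_5_general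
    (K : Type*) [Group K]
    (V : Type*) [NormedAddCommGroup V] [NormedSpace ℝ V] [FiniteDimensional ℝ V]
    (ρ : K →* (Module.End ℝ V))
    (B : V →ₗ[ℝ] V →ₗ[ℝ] ℝ)
    (hBsymm : ∀ x y : V, B x y = B y x)
    (hBinv : ∀ (g : K) (x y : V), B (ρ g x) (ρ g y) = B x y)
    (f p : Submodule ℝ V)
    (hcompl : IsCompl f p)
    (horth : ∀ x ∈ f, ∀ y ∈ p, B x y = 0)
    (hfinv : ∀ (g : K), ∀ x ∈ f, ρ g x ∈ f)
    (hpinv : ∀ (g : K), ∀ x ∈ p, ρ g x ∈ p)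
    (hBf : ∀ x ∈ f, x ≠ 0 → B x x < 0)
    (hBp : ∀ x ∈ p, x ≠ 0 → 0 < B x x)
    (Φ : V →ₗ[ℝ] V →ₗ[ℝ] ℝ)
    (hΦsymm : ∀ x y : V, Φ x y = Φ y x)
    (hΦpos : ∀ x : V, x ≠ 0 → 0 < Φ x x)
    (hΦinv : ∀ (g : K) (x y : V), Φ (ρ g x) (ρ g y) = Φ x y)
    (hΦfp : ∀ x ∈ f, ∀ y ∈ p, Φ x y = 0) :
    ∃ (m : ℕ) (W : Fin m → Submodule ℝ V) (lam : Fin m → ℝ),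
      DirectSum.IsInternal W
      ∧ (∀ i, ∀ (g : K), ∀ x ∈ W i, ρ g x ∈ W i)
      ∧ (∀ i, W i ≤ f ∨ W i ≤ p)
      ∧ (∀ i j, i ≠ j → ∀ x ∈ W i, ∀ y ∈ W j, Φ x y = 0 ∧ B x y = 0)
      ∧ (∀ i, W i ≠ ⊥ ∧
          ∀ U : Submodule ℝ V, U ≤ W i → (∀ (g : K), ∀ x ∈ U, ρ g x ∈ U) →
            U = ⊥ ∨ U = W i)
      ∧ (∀ i, lam i ≠ 0)
      ∧ (∀ i, ∀ x ∈ W i, ∀ y ∈ W i, Φ x y = lam i * B x y)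
      ∧ (∀ i, W i ≤ f → lam i < 0)
      ∧ (∀ i, W i ≤ p → 0 < lam i) := by
  have hinv (W : Submodule ℝ V) := Representation.mem_invtSubmodule_iff_forall_mem ρ (W := W)
  obtain ⟨𝒲, hsup, hpair, hpieces⟩ :=
    Representation.exists_finset_isIrreducibleSubspace_of_isCompl ρ hBsymm hΦsymm hΦpos hBinv
      hΦinv hcompl ((hinv f).mpr hfinv) ((hinv p).mpr hpinv)
      (fun x hx y hy => ⟨hΦfp x hx y hy, horth x hx y hy⟩)
      (fun x hx hx0 => (hBf x hx hx0).ne) (fun x hx hx0 => (hBp x hx hx0).ne')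
  obtain ⟨m, W, hint, hortho, hW⟩ := exists_fin_isInternal_of_finset hΦpos 𝒲 hsup hpair hpieces
  choose hfp hirr lam hlam using hW
  have hneg : ∀ i, W i ≤ f → lam i < 0 := fun i hi =>
    neg_of_apply_self_eq_mul (hirr i).2.1 hΦpos (fun x hx => hBf x (hi hx))
      fun x hx => hlam i x hx x hx
  have hpos : ∀ i, W i ≤ p → 0 < lam i := fun i hi =>
    pos_of_apply_self_eq_mul (hirr i).2.1 hΦpos (fun x hx => hBp x (hi hx))
      fun x hx => hlam i x hx x hx
  refine ⟨m, W, lam, hint, fun i => (hinv _).mp (hirr i).1, hfp, hortho,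
    fun i => ⟨(hirr i).2.1, fun U hU hUinv => (hirr i).2.2 U hU ((hinv U).mpr hUinv)⟩,
    fun i => ?_, hlam, hneg, hpos⟩
  rcases hfp i with hi | hi
  exacts [(hneg i hi).ne, (hpos i hi).ne']

/-- Lemma 4.1 of the paper: for a continuous representation `ρ` of a
compact group `K` on a finite-dimensional real vector space `V` with a
`ρ(K)`-invariant nondegenerate symmetric bilinear form `B`, a `B`-orthogonal
invariant splitting `V = 𝔣 ⊕ 𝔭` with `B` negative definite on `𝔣` and positive
definite on `𝔭`, and a `ρ(K)`-invariant inner product `Φ` with `⟨𝔣,𝔭⟩ = 0`, the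
space splits into irreducible invariant subspaces `V = V₁ ⊕ ⋯ ⊕ V_m`, pairwise
orthogonal for both `Φ` and `B`, each contained in `𝔣` or `𝔭`, on which
`Φ = λ_i B` with `λ_i < 0` on pieces in `𝔣` and `λ_i > 0` on pieces in `𝔭`. -/
theorem stmt_5
    (K : Type*) [Group K] [TopologicalSpace K] [IsTopologicalGroup K] [CompactSpace K]
    (V : Type*) [NormedAddCommGroup V] [NormedSpace ℝ V] [FiniteDimensional ℝ V]
    (ρ : K →* (Module.End ℝ V))
    (hρcont : Continuous fun kx : K × V => ρ kx.1 kx.2)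
    (B : V →ₗ[ℝ] V →ₗ[ℝ] ℝ)
    (hBsymm : ∀ x y : V, B x y = B y x)
    (hBnd : ∀ x : V, (∀ y : V, B x y = 0) → x = 0)
    (hBinv : ∀ (g : K) (x y : V), B (ρ g x) (ρ g y) = B x y)
    (f p : Submodule ℝ V)
    (hcompl : IsCompl f p)
    (horth : ∀ x ∈ f, ∀ y ∈ p, B x y = 0)
    (hfinv : ∀ (g : K), ∀ x ∈ f, ρ g x ∈ f)
    (hpinv : ∀ (g : K), ∀ x ∈ p, ρ g x ∈ p)
    (hBf : ∀ x ∈ f, x ≠ 0 → B x x < 0)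
    (hBp : ∀ x ∈ p, x ≠ 0 → 0 < B x x)
    (Φ : V →ₗ[ℝ] V →ₗ[ℝ] ℝ)
    (hΦsymm : ∀ x y : V, Φ x y = Φ y x)
    (hΦpos : ∀ x : V, x ≠ 0 → 0 < Φ x x)
    (hΦinv : ∀ (g : K) (x y : V), Φ (ρ g x) (ρ g y) = Φ x y)
    (hΦfp : ∀ x ∈ f, ∀ y ∈ p, Φ x y = 0) :
    ∃ (m : ℕ) (W : Fin m → Submodule ℝ V) (lam : Fin m → ℝ),
      DirectSum.IsInternal W
      ∧ (∀ i, ∀ (g : K), ∀ x ∈ W i, ρ g x ∈ W i)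
      ∧ (∀ i, W i ≤ f ∨ W i ≤ p)
      ∧ (∀ i j, i ≠ j → ∀ x ∈ W i, ∀ y ∈ W j, Φ x y = 0 ∧ B x y = 0)
      ∧ (∀ i, W i ≠ ⊥ ∧
          ∀ U : Submodule ℝ V, U ≤ W i → (∀ (g : K), ∀ x ∈ U, ρ g x ∈ U) →
            U = ⊥ ∨ U = W i)
      ∧ (∀ i, lam i ≠ 0)
      ∧ (∀ i, ∀ x ∈ W i, ∀ y ∈ W i, Φ x y = lam i * B x y)
      ∧ (∀ i, W i ≤ f → lam i < 0)
      ∧ (∀ i, W i ≤ p → 0 < lam i) :=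
  stmt_5_general K V ρ B hBsymm hBinv f p hcompl horth hfinv hpinv hBf hBp Φ hΦsymm hΦpos hΦinv hΦfp
end

section
/- Let a, b > 0 and consider the 2×2 real matrices X₁ = a·[[0,1],[1,0]], X₂ = b·[[1,0],[0,−1]], X₃ = (ab/√(a²+b²))·[[0,1],[−1,0]], which are trace-free, and set r = 2b²/√(a²+b²), s = 2a²/√(a²+b²), t = −2√(a²+b²). Then, with the commutator bracket ⁅X,Y⁆ = XY − YX: (i) ⁅X₂,X₃⁆ = r·X₁, ⁅X₃,X₁⁆ = s·X₂, ⁅X₁,X₂⁆ = t·X₃ and r + s + t = 0; (ii) (X₁,X₂,X₃) is a basis of the Lie algebra 𝔰𝔩(2,ℝ) of trace-free 2×2 real matrices; (iii) the inner product ⟨·,·⟩ on 𝔰𝔩(2,ℝ) making (X₁,X₂,X₃) orthonormal satisfies ⟨⁅X,Y⁆,Z⟩ + ⟨⁅Y,Z⁆,X⟩ + ⟨⁅Z,X⁆,Y⟩ = 0 for all X,Y,Z ∈ 𝔰𝔩(2,ℝ); and (iv) trace(ad X) = 0 for every X ∈ 𝔰𝔩(2,ℝ). -/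
/-!
With `J = !![0, 1; 1, 0]`, `H = !![1, 0; 0, -1]` and `K = !![0, 1; -1, 0]` one has
`⁅H, K⁆ = 2J`, `⁅K, J⁆ = 2H`, `⁅J, H⁆ = -2K`; rescaling gives the structure constants `r, s, t`,
and `r + s = 2√(a² + b²) = -t`. The cyclic sum is an alternating trilinear form, so on the span
of `X₁, X₂, X₃` it is the determinant of the coefficients times its value `r + s + t = 0` at
`(X₁, X₂, X₃)`. Each `Xᵢ` is a multiple of a bracket, so `𝔰𝔩(2,ℝ)` is perfect, and `trace ∘ ad`
vanishes on brackets.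
-/

attribute [local instance 100] LieRing.ofAssociativeRing

open LieAlgebra.SpecialLinear

theorem mem_sl_iff_trace_eq_zero {n R : Type*} [DecidableEq n] [Fintype n] [CommRing R]
    {M : Matrix n n R} : M ∈ sl n R ↔ M.trace = 0 :=
  Iff.rfl

section

variable {R : Type*} [CommRing R]

theorem lie_diag_rot : ⁅(!![1, 0; 0, -1] : Matrix (Fin 2) (Fin 2) R), !![0, 1; -1, 0]⁆
    = (2 : R) • (!![0, 1; 1, 0] : Matrix (Fin 2) (Fin 2) R) := by
  ext i j; fin_cases i <;> fin_cases j <;> simp [Ring.lie_def] <;> ring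

theorem lie_rot_sym : ⁅(!![0, 1; -1, 0] : Matrix (Fin 2) (Fin 2) R), !![0, 1; 1, 0]⁆
    = (2 : R) • (!![1, 0; 0, -1] : Matrix (Fin 2) (Fin 2) R) := by
  ext i j; fin_cases i <;> fin_cases j <;> simp [Ring.lie_def] <;> ring

theorem lie_sym_diag : ⁅(!![0, 1; 1, 0] : Matrix (Fin 2) (Fin 2) R), !![1, 0; 0, -1]⁆
    = (-2 : R) • (!![0, 1; -1, 0] : Matrix (Fin 2) (Fin 2) R) := by
  ext i j; fin_cases i <;> fin_cases j <;> simp [Ring.lie_def] <;> ring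

end

theorem span_smul_sym_diag_rot_eq_sl_two {F : Type*} [Field F] [NeZero (2 : F)] {a b c : F}
    (ha : a ≠ 0) (hb : b ≠ 0) (hc : c ≠ 0) :
    Submodule.span F {a • (!![0, 1; 1, 0] : Matrix (Fin 2) (Fin 2) F), b • !![1, 0; 0, -1],
      c • !![0, 1; -1, 0]} = (sl (Fin 2) F).toSubmodule := by
  apply le_antisymm
  · rw [Submodule.span_le]
    rintro M (rfl | rfl | rfl) <;> simp [mem_sl_iff_trace_eq_zero, Matrix.trace_fin_two]
  · intro M hM
    have h₁₁ : M 1 1 = -M 0 0 := by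
      rw [LieSubalgebra.mem_toSubmodule, mem_sl_iff_trace_eq_zero, Matrix.trace_fin_two] at hM
      linear_combination hM
    refine Submodule.mem_span_triple.2
      ⟨(M 0 1 + M 1 0) / (2 * a), M 0 0 / b, (M 0 1 - M 1 0) / (2 * c), ?_⟩
    ext i j; fin_cases i <;> fin_cases j <;> simp [h₁₁] <;> field_simp <;> ring

theorem cyclic_sum_eq_zero_of_lie_relations {R A : Type*} [CommRing R] [LieRing A]
    [LieAlgebra R A] {X₁ X₂ X₃ : A} {r s t : R}
    (h₂₃ : ⁅X₂, X₃⁆ = r • X₁) (h₃₁ : ⁅X₃, X₁⁆ = s • X₂) (h₁₂ : ⁅X₁, X₂⁆ = t • X₃)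
    (hrst : r + s + t = 0) (Φ : A →ₗ[R] A →ₗ[R] R)
    (hΦ : ∀ i j : Fin 3, Φ (![X₁, X₂, X₃] i) (![X₁, X₂, X₃] j) = if i = j then 1 else 0)
    {X Y Z : A} (hX : X ∈ Submodule.span R {X₁, X₂, X₃})
    (hY : Y ∈ Submodule.span R {X₁, X₂, X₃}) (hZ : Z ∈ Submodule.span R {X₁, X₂, X₃}) :
    Φ ⁅X, Y⁆ Z + Φ ⁅Y, Z⁆ X + Φ ⁅Z, X⁆ Y = 0 := by
  obtain ⟨α₁, α₂, α₃, rfl⟩ := Submodule.mem_span_triple.1 hX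
  obtain ⟨β₁, β₂, β₃, rfl⟩ := Submodule.mem_span_triple.1 hY
  obtain ⟨γ₁, γ₂, γ₃, rfl⟩ := Submodule.mem_span_triple.1 hZ
  have h₃₂ : ⁅X₃, X₂⁆ = -(r • X₁) := by rw [← lie_skew, h₂₃]
  have h₁₃ : ⁅X₁, X₃⁆ = -(s • X₂) := by rw [← lie_skew, h₃₁]
  have h₂₁ : ⁅X₂, X₁⁆ = -(t • X₃) := by rw [← lie_skew, h₁₂]
  have hΦ' := hΦ
  simp only [Fin.forall_fin_succ, Fin.isValue, Matrix.cons_val_zero, Matrix.cons_val_succ,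
    Fin.succ_zero_eq_one, Matrix.cons_val_fin_one, Fin.succ_one_eq_two, IsEmpty.forall_iff,
    and_true, ↓reduceIte, zero_ne_one, Fin.reduceEq, Fin.succ_ne_zero] at hΦ'
  obtain ⟨⟨e₁₁, e₁₂, e₁₃⟩, ⟨e₂₁, e₂₂, e₂₃⟩, ⟨e₃₁, e₃₂, e₃₃⟩⟩ := hΦ'
  simp only [lie_add, add_lie, lie_smul, smul_lie, lie_self, h₂₃, h₃₁, h₁₂, h₃₂, h₁₃, h₂₁,
    map_add, map_smul, map_neg, LinearMap.add_apply, LinearMap.smul_apply, LinearMap.neg_apply,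
    e₁₁, e₁₂, e₁₃, e₂₁, e₂₂, e₂₃, e₃₁, e₃₂, e₃₃, smul_eq_mul, map_zero, LinearMap.zero_apply]
  linear_combination (α₁ * β₂ * γ₃ - α₁ * β₃ * γ₂ - α₂ * β₁ * γ₃ + α₂ * β₃ * γ₁
    + α₃ * β₁ * γ₂ - α₃ * β₂ * γ₁) * hrst

section

variable {K A : Type*} [Field K] [LieRing A] [LieAlgebra K A] {H : LieSubalgebra K A}

theorem LieSubalgebra.lie_mem_map_lowerCentralSeries_one {Y Z : A} (hY : Y ∈ H) (hZ : Z ∈ H) :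
    ⁅Y, Z⁆ ∈ (LieModule.lowerCentralSeries K H H 1).toSubmodule.map H.toSubmodule.subtype := by
  have hlie : ⁅(⟨Y, hY⟩ : H), ⟨Z, hZ⟩⁆ ∈ LieModule.lowerCentralSeries K H H 1 := by
    rw [LieModule.lowerCentralSeries_succ, LieModule.lowerCentralSeries_zero]
    exact LieSubmodule.lie_mem_lie (LieSubmodule.mem_top _) (LieSubmodule.mem_top _)
  exact ⟨_, hlie, rfl⟩

theorem LieSubalgebra.trace_ad_eq_zero_of_lie_relations {X₁ X₂ X₃ : A} {r s t : K}
    (hr : r ≠ 0) (hs : s ≠ 0) (ht : t ≠ 0)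
    (h₂₃ : ⁅X₂, X₃⁆ = r • X₁) (h₃₁ : ⁅X₃, X₁⁆ = s • X₂) (h₁₂ : ⁅X₁, X₂⁆ = t • X₃)
    (hspan : Submodule.span K {X₁, X₂, X₃} = H.toSubmodule) (x : H) :
    LinearMap.trace K H (LieAlgebra.ad K H x) = 0 := by
  have hX : {X₁, X₂, X₃} ⊆ (H.toSubmodule : Set A) := hspan ▸ Submodule.subset_span
  simp only [Set.insert_subset_iff, Set.singleton_subset_iff, SetLike.mem_coe] at hX
  obtain ⟨h₁, h₂, h₃⟩ := hX
  have hperfect : Submodule.span K {X₁, X₂, X₃} ≤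
      (LieModule.lowerCentralSeries K H H 1).toSubmodule.map H.toSubmodule.subtype := by
    simp only [Submodule.span_le, Set.insert_subset_iff, Set.singleton_subset_iff,
      SetLike.mem_coe]
    refine ⟨?_, ?_, ?_⟩
    · rw [← inv_smul_smul₀ hr X₁, ← h₂₃]
      exact Submodule.smul_mem _ _ (lie_mem_map_lowerCentralSeries_one h₂ h₃)
    · rw [← inv_smul_smul₀ hs X₂, ← h₃₁]
      exact Submodule.smul_mem _ _ (lie_mem_map_lowerCentralSeries_one h₃ h₁)
    · rw [← inv_smul_smul₀ ht X₃, ← h₁₂]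
      exact Submodule.smul_mem _ _ (lie_mem_map_lowerCentralSeries_one h₁ h₂)
  obtain ⟨y, hy, hyx⟩ := hperfect (hspan ▸ x.2 : (x : A) ∈ Submodule.span K {X₁, X₂, X₃})
  obtain rfl : y = x := Subtype.ext hyx
  exact LieModule.trace_toEnd_eq_zero_of_mem_lcs K H H le_rfl hy

end

open LieAlgebra.SpecialLinear in
/-- the verification of Section 6 of the paper for
`𝔰𝔩(2,ℝ)` (the Lie algebra of trace-free 2×2 real matrices, i.e. of the
universal cover of `SL(2,ℝ)`): the matrices `X₁, X₂, X₃` are trace-free, satisfy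
`⁅X₂,X₃⁆ = r X₁`, `⁅X₃,X₁⁆ = s X₂`, `⁅X₁,X₂⁆ = t X₃` with `r + s + t = 0`, form
a basis of `𝔰𝔩(2,ℝ)`, the inner product making them orthonormal satisfies the
cyclic condition, and `trace (ad X) = 0` for every `X ∈ 𝔰𝔩(2,ℝ)`. -/
theorem stmt_11 (a b : ℝ) (ha : 0 < a) (hb : 0 < b)
    (X1 X2 X3 : Matrix (Fin 2) (Fin 2) ℝ)
    (hX1 : X1 = a • !![0, 1; 1, 0])
    (hX2 : X2 = b • !![1, 0; 0, -1])
    (hX3 : X3 = (a * b / Real.sqrt (a ^ 2 + b ^ 2)) • !![0, 1; -1, 0])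
    (r s t : ℝ)
    (hr : r = 2 * b ^ 2 / Real.sqrt (a ^ 2 + b ^ 2))
    (hs : s = 2 * a ^ 2 / Real.sqrt (a ^ 2 + b ^ 2))
    (ht : t = -2 * Real.sqrt (a ^ 2 + b ^ 2))
    (Φ : Matrix (Fin 2) (Fin 2) ℝ →ₗ[ℝ] Matrix (Fin 2) (Fin 2) ℝ →ₗ[ℝ] ℝ)
    (hΦ : ∀ i j : Fin 3, Φ (![X1, X2, X3] i) (![X1, X2, X3] j)
            = if i = j then 1 else 0) :
    -- the matrices are trace-free
    (X1.trace = 0 ∧ X2.trace = 0 ∧ X3.trace = 0)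
    -- (i) bracket relations
    ∧ (⁅X2, X3⁆ = r • X1 ∧ ⁅X3, X1⁆ = s • X2 ∧ ⁅X1, X2⁆ = t • X3 ∧ r + s + t = 0)
    -- (ii) basis of 𝔰𝔩(2,ℝ)
    ∧ (LinearIndependent ℝ ![X1, X2, X3]
        ∧ Submodule.span ℝ {X1, X2, X3} = (sl (Fin 2) ℝ).toSubmodule)
    -- (iii) cyclic condition
    ∧ (∀ X ∈ sl (Fin 2) ℝ, ∀ Y ∈ sl (Fin 2) ℝ, ∀ Z ∈ sl (Fin 2) ℝ,
        Φ ⁅X, Y⁆ Z + Φ ⁅Y, Z⁆ X + Φ ⁅Z, X⁆ Y = 0)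
    -- (iv) tr (ad X) = 0
    ∧ (∀ x : ↥(sl (Fin 2) ℝ),
        LinearMap.trace ℝ ↥(sl (Fin 2) ℝ) (LieAlgebra.ad ℝ ↥(sl (Fin 2) ℝ) x) = 0) := by
  have hρ : 0 < √(a ^ 2 + b ^ 2) := by positivity
  have hr0 : r ≠ 0 := by rw [hr]; positivity
  have hs0 : s ≠ 0 := by rw [hs]; positivity
  have ht0 : t ≠ 0 := by rw [ht]; exact mul_ne_zero (by norm_num) hρ.ne'
  have hspan : Submodule.span ℝ {X1, X2, X3} = (sl (Fin 2) ℝ).toSubmodule := by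
    rw [hX1, hX2, hX3]
    exact span_smul_sym_diag_rot_eq_sl_two ha.ne' hb.ne' (by positivity)
  have hsl : ∀ X ∈ ({X1, X2, X3} : Set _), X ∈ sl (Fin 2) ℝ := fun X hX =>
    (LieSubalgebra.mem_toSubmodule _).1 (hspan ▸ Submodule.subset_span hX)
  have h₂₃ : ⁅X2, X3⁆ = r • X1 := by
    rw [hX1, hX2, hX3, smul_lie, lie_smul, lie_diag_rot, smul_smul, smul_smul, smul_smul, hr]
    congr 1; field_simp
  have h₃₁ : ⁅X3, X1⁆ = s • X2 := by
    rw [hX1, hX2, hX3, smul_lie, lie_smul, lie_rot_sym, smul_smul, smul_smul, smul_smul, hs]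
    congr 1; field_simp
  have h₁₂ : ⁅X1, X2⁆ = t • X3 := by
    rw [hX1, hX2, hX3, smul_lie, lie_smul, lie_sym_diag, smul_smul, smul_smul, smul_smul, ht]
    congr 1; field_simp
  have hrst : r + s + t = 0 := by
    rw [hr, hs, ht, ← add_div, ← mul_add, add_comm (b ^ 2), mul_div_assoc, Real.div_sqrt]
    ring
  refine ⟨⟨hsl X1 (by simp), hsl X2 (by simp), hsl X3 (by simp)⟩, ⟨h₂₃, h₃₁, h₁₂, hrst⟩,
    ⟨LinearMap.BilinForm.linearIndependent_of_iIsOrtho (B := Φ)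
      (fun i j hij => (hΦ i j).trans (if_neg hij)) (fun i => by simp [hΦ]),
      hspan⟩, ?_,
    LieSubalgebra.trace_ad_eq_zero_of_lie_relations hr0 hs0 ht0 h₂₃ h₃₁ h₁₂ hspan⟩
  intro X hX Y hY Z hZ
  rw [← LieSubalgebra.mem_toSubmodule, ← hspan] at hX hY hZ
  exact cyclic_sum_eq_zero_of_lie_relations h₂₃ h₃₁ h₁₂ hrst Φ hΦ hX hY hZ
end
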